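/- arXiv:1307.3484 — 4 statements merged into one kernel-verified Lean document; each statement's English description precedes it below -/
import Mathlib

section
/- Let q ≥ 3, let 1 ≤ r ≤ n, and let U ⊆ H_n(F_{q²}) be the set of all hermitian matrices of rank r. Suppose L ⊆ U is a leaf of some hermitian matrix of rank r − 1, and Φ : U → U is a bijection such that rank(Φ(A) − Φ(B)) = 1 ⟺ rank(A − B) = 1 for all A, B ∈ U. Then there is exactly one hermitian matrix N of rank r − 1 such that Φ(L) = {Φ(C) : C ∈ L} is a leaf of N. -/
open Matrix

/-- Conjugate transpose with respect to the involution `x ↦ x ^ q` on `F = F_{q²}`. -/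
def ctrans (q : ℕ) {F : Type*} [Field F] {m n : Type*} (A : Matrix m n F) : Matrix n m F :=
  Matrix.of fun i j => (A j i) ^ q

/-- `A` is hermitian with respect to the involution `x ↦ x ^ q`. -/
def IsHerm (q : ℕ) {F : Type*} [Field F] {n : Type*} (A : Matrix n n F) : Prop :=
  ctrans q A = A

/-- The rank-one hermitian matrix `x x*`. -/
def outerq (q : ℕ) {F : Type*} [Field F] {n : Type*} (x : n → F) : Matrix n n F :=
  Matrix.of fun i j => x i * (x j) ^ q

/-- The set `{A + λ x x* : λ ∈ F_q, λ ≠ 0}` (the fixed field `F_q` is `{λ : λ ^ q = λ}`). -/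
def leafSet (q : ℕ) {F : Type*} [Field F] {n : Type*} (A : Matrix n n F) (x : n → F) :
    Set (Matrix n n F) :=
  {B | ∃ lam : F, lam ^ q = lam ∧ lam ≠ 0 ∧ B = A + lam • outerq q x}

/-- `L` is a leaf of the hermitian matrix `A`: it is of the form
`{A + λ x x* : λ ∈ F_q, λ ≠ 0}` for a nonzero vector `x` and all of its members have
rank `rank A + 1`. -/
def IsLeafOf (q : ℕ) {F : Type*} [Field F] {n : Type*} [Fintype n] (L : Set (Matrix n n F))
    (A : Matrix n n F) : Prop :=
  ∃ x : n → F, x ≠ 0 ∧ L = leafSet q A x ∧ ∀ B ∈ L, B.rank = A.rank + 1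

/-!
The matrices of a leaf `{N₀ + λ x x* : λ ∈ F_q^×}` are pairwise adjacent, hence so are their
images under `Φ`. Three pairwise adjacent hermitian matrices are collinear: a hermitian matrix
of rank one is `y y*` because the norm `F_{q²}^× → F_q^×` is onto, and `z z* - y y*` has rank at
most one only when `z` is a multiple of `y`. So `Φ(L)` consists of `q - 1` distinct points
`M + c y y*` with `c ∈ F_q`; the single value `d ∈ F_q` that is missed gives the centre
`N = M + d y y*`, and `Φ(L)` is the leaf of `N` in direction `y`. The centre cannot have rank `r`:
its preimage would be adjacent to every matrix of `L`, hence on the line of `L`, hence in `L`, and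
then `N` would belong to its own leaf. Two matrices of rank `r` on the leaf then force
`rank N = r - 1`, and a leaf determines its centre.
-/

namespace Matrix

variable {F : Type*} [Field F] {m : Type*} [Fintype m]

theorem rank_eq_zero_iff [DecidableEq m] {A : Matrix m m F} : A.rank = 0 ↔ A = 0 := by
  rw [rank, Submodule.finrank_eq_zero, LinearMap.range_eq_bot, ← toLin'_apply',
    LinearEquiv.map_eq_zero_iff]

theorem rank_add_le (A B : Matrix m m F) : (A + B).rank ≤ A.rank + B.rank := by
  have hle : LinearMap.range (A + B).mulVecLin ≤
      LinearMap.range A.mulVecLin ⊔ LinearMap.range B.mulVecLin := by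
    rintro w ⟨v, rfl⟩
    rw [mulVecLin_apply, add_mulVec]
    exact Submodule.add_mem_sup ⟨v, rfl⟩ ⟨v, rfl⟩
  exact (Submodule.finrank_mono hle).trans (Submodule.finrank_add_le_finrank_add_finrank _ _)

theorem rank_le_of_ker_le {A B : Matrix m m F}
    (h : LinearMap.ker A.mulVecLin ≤ LinearMap.ker B.mulVecLin) : B.rank ≤ A.rank := by
  have hA := LinearMap.finrank_range_add_finrank_ker A.mulVecLin
  have hB := LinearMap.finrank_range_add_finrank_ker B.mulVecLin
  have := Submodule.finrank_mono h
  unfold rank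
  omega

theorem exists_eq_vecMulVec_of_rank_le_one [DecidableEq m] {A : Matrix m m F} (h : A.rank ≤ 1) :
    ∃ w t : m → F, A = vecMulVec w t := by
  obtain ⟨w, hw⟩ := finrank_le_one_iff.mp h
  choose t ht using fun j => hw ⟨A *ᵥ Pi.single j 1, _, rfl⟩
  refine ⟨w, t, ext fun i j => ?_⟩
  simpa [mulVec_single, vecMulVec_apply, mul_comm] using
    (congrFun (congrArg Subtype.val (ht j)) i).symm

theorem vecMulVec_mulVec_eq_smul (y w v : m → F) : vecMulVec y w *ᵥ v = (w ⬝ᵥ v) • y := by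
  rw [vecMulVec_mulVec, op_smul_eq_smul]

theorem rank_le_max_rank_add_smul_vecMulVec [DecidableEq m] (M : Matrix m m F) (y w : m → F)
    {e₁ e₂ : F} (hne : e₁ ≠ e₂) :
    M.rank ≤ max (M + e₁ • vecMulVec y w).rank (M + e₂ • vecMulVec y w).rank := by
  set P := M + e₂ • vecMulVec y w
  by_cases hy : ∃ u, P *ᵥ u = y
  · obtain ⟨u, hu⟩ := hy
    have hM : M = P * (1 - e₂ • vecMulVec u w) := by
      rw [Matrix.mul_sub, Matrix.mul_one, Matrix.mul_smul, mul_vecMulVec, hu]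
      simp [P]
    exact le_max_of_le_right (hM ▸ rank_mul_le_left _ _)
  · refine le_max_of_le_left (rank_le_of_ker_le fun v hv => ?_)
    rw [LinearMap.mem_ker, mulVecLin_apply] at hv ⊢
    have hPv : P *ᵥ v = ((e₂ - e₁) * (w ⬝ᵥ v)) • y := by
      have : P = (M + e₁ • vecMulVec y w) + (e₂ - e₁) • vecMulVec y w := by
        simp only [P]; module
      rw [this, add_mulVec, hv, zero_add, smul_mulVec, vecMulVec_mulVec_eq_smul, smul_smul]
    have hwv : w ⬝ᵥ v = 0 := by
      by_contra h
      have hc : (e₂ - e₁) * (w ⬝ᵥ v) ≠ 0 := mul_ne_zero (sub_ne_zero.mpr hne.symm) h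
      exact hy ⟨((e₂ - e₁) * (w ⬝ᵥ v))⁻¹ • v, by rw [mulVec_smul, hPv, inv_smul_smul₀ hc]⟩
    rwa [add_mulVec, smul_mulVec, vecMulVec_mulVec_eq_smul, hwv, zero_smul, smul_zero,
      add_zero] at hv

end Matrix

theorem pow_sub_one_eq_one_iff {F : Type*} [Field F] {q : ℕ} (hq : 1 ≤ q) {a : F} (ha : a ≠ 0) :
    a ^ (q - 1) = 1 ↔ a ^ q = a := by
  obtain ⟨q, rfl⟩ := Nat.exists_eq_add_of_le' hq
  rw [pow_succ, Nat.add_sub_cancel, mul_eq_right₀ ha]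

section FiniteField

variable {F : Type*} [Field F] [Fintype F] {q : ℕ}

theorem add_pow_of_card_eq_sq (hq : IsPrimePow q) (hF : Fintype.card F = q ^ 2) (a b : F) :
    (a + b) ^ q = a ^ q + b ^ q := by
  obtain ⟨p, k, hp, -, rfl⟩ := hq
  have hp := hp.nat_prime
  obtain ⟨n, hchar, hcard⟩ := FiniteField.card F (ringChar F)
  have hchar_eq : ringChar F = p := by
    rw [hF, ← pow_mul] at hcard
    exact (Nat.prime_dvd_prime_iff_eq hchar hp).mp
      (hchar.dvd_of_dvd_pow (hcard ▸ dvd_pow_self _ n.ne_zero))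
  have := Fact.mk hp
  have : CharP F p := hchar_eq ▸ ringChar.charP F
  exact add_pow_char_pow a b p k

theorem pow_pow_of_card_eq_sq (hF : Fintype.card F = q ^ 2) (a : F) : (a ^ q) ^ q = a := by
  rw [← pow_mul, ← sq, ← hF, FiniteField.pow_card]

theorem one_le_of_card_eq_sq (hF : Fintype.card F = q ^ 2) : 1 ≤ q := by
  have := Fintype.one_lt_card (α := F)
  rcases q with _ | q <;> simp_all

theorem card_units_eq_mul (hF : Fintype.card F = q ^ 2) :
    Nat.card Fˣ = (q - 1) * (q + 1) := by
  have := one_le_of_card_eq_sq hF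
  rw [Nat.card_units, Nat.card_eq_fintype_card, hF]
  zify [this, Nat.one_le_pow 2 q this]
  ring

theorem card_ker_powMonoidHom_sub_one (hF : Fintype.card F = q ^ 2) :
    Nat.card (powMonoidHom (q - 1) : Fˣ →* Fˣ).ker = q - 1 := by
  rw [IsCyclic.card_powMonoidHom_ker, card_units_eq_mul hF, Nat.gcd_mul_right_left]

theorem range_powMonoidHom_add_one_eq_ker (hF : Fintype.card F = q ^ 2) :
    (powMonoidHom (q + 1) : Fˣ →* Fˣ).range = (powMonoidHom (q - 1)).ker := by
  refine Subgroup.eq_of_le_of_card_ge ?_ ?_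
  · rintro _ ⟨b, rfl⟩
    rw [MonoidHom.mem_ker, powMonoidHom_apply, powMonoidHom_apply, ← pow_mul, mul_comm,
      ← card_units_eq_mul hF, pow_card_eq_one']
  · rw [card_ker_powMonoidHom_sub_one hF, IsCyclic.card_powMonoidHom_range, card_units_eq_mul hF,
      Nat.gcd_mul_left_left, Nat.mul_div_cancel _ (Nat.succ_pos q)]

theorem exists_mul_pow_eq_of_pow_eq_self (hF : Fintype.card F = q ^ 2) {a : F} (ha : a ^ q = a) :
    ∃ b : F, b * b ^ q = a := by
  rcases eq_or_ne a 0 with rfl | ha0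
  · exact ⟨0, zero_mul _⟩
  have hker : Units.mk0 a ha0 ∈ (powMonoidHom (q - 1) : Fˣ →* Fˣ).ker := by
    rw [MonoidHom.mem_ker, powMonoidHom_apply, Units.ext_iff, Units.val_pow_eq_pow_val,
      Units.val_mk0, Units.val_one, pow_sub_one_eq_one_iff (one_le_of_card_eq_sq hF) ha0]
    exact ha
  rw [← range_powMonoidHom_add_one_eq_ker hF] at hker
  obtain ⟨b, hb⟩ := hker
  refine ⟨b, ?_⟩
  rw [← pow_succ', ← Units.val_pow_eq_pow_val, ← powMonoidHom_apply, hb, Units.val_mk0]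

theorem exists_pow_eq_self_ne_zero_ne_one (hF : Fintype.card F = q ^ 2) (hq : 3 ≤ q) :
    ∃ μ : F, μ ^ q = μ ∧ μ ≠ 0 ∧ μ ≠ 1 := by
  have : Nontrivial (powMonoidHom (q - 1) : Fˣ →* Fˣ).ker := Finite.one_lt_card_iff_nontrivial.mp
    (by rw [card_ker_powMonoidHom_sub_one hF]; omega)
  obtain ⟨u, hu, hu1⟩ := Subgroup.exists_ne_one_of_nontrivial (powMonoidHom (q - 1) : Fˣ →* Fˣ).ker
  refine ⟨u, ?_, u.ne_zero, Units.val_eq_one.not.mpr hu1⟩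
  rw [MonoidHom.mem_ker, powMonoidHom_apply, Units.ext_iff, Units.val_pow_eq_pow_val,
    Units.val_one, pow_sub_one_eq_one_iff (by omega) u.ne_zero] at hu
  exact hu

end FiniteField

section Outer

variable {q : ℕ} {F : Type*} [Field F] {m : Type*}

theorem outerq_eq_vecMulVec (x : m → F) : outerq q x = vecMulVec x (x ^ q) := rfl

theorem outerq_zero : outerq q (0 : m → F) = 0 := by
  ext
  simp [outerq]

theorem outerq_smul (b : F) (x : m → F) : outerq q (b • x) = (b * b ^ q) • outerq q x := by
  ext i j
  simp only [outerq, of_apply, Matrix.smul_apply, Pi.smul_apply, smul_eq_mul, mul_pow]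
  ring

theorem outerq_ne_zero {x : m → F} (hx : x ≠ 0) : outerq q x ≠ 0 := by
  obtain ⟨i, hi⟩ := Function.ne_iff.mp hx
  intro h
  have := congrFun (congrFun h i) i
  simp_all [outerq]

variable [Fintype m]

theorem rank_smul_outerq_le (c : F) (x : m → F) : (c • outerq q x).rank ≤ 1 := by
  rw [outerq_eq_vecMulVec, ← smul_vecMulVec]
  exact rank_vecMulVec_le _ _

theorem rank_smul_outerq [DecidableEq m] {c : F} {x : m → F} (hc : c ≠ 0) (hx : x ≠ 0) :
    (c • outerq q x).rank = 1 := by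
  have : (c • outerq q x).rank ≠ 0 := by
    rw [Ne, Matrix.rank_eq_zero_iff, smul_eq_zero, not_or]
    exact ⟨hc, outerq_ne_zero hx⟩
  have := rank_smul_outerq_le (q := q) c x
  omega

end Outer

section Hermitian

variable {q : ℕ} {F : Type*} [Field F] {m : Type*}

theorem sub_pow_of_add_pow (hadd : ∀ a b : F, (a + b) ^ q = a ^ q + b ^ q) (a b : F) :
    (a - b) ^ q = a ^ q - b ^ q := by
  rw [eq_sub_iff_add_eq, ← hadd, sub_add_cancel]

theorem IsHerm.apply {H : Matrix m m F} (hH : IsHerm q H) (i j : m) : H j i ^ q = H i j :=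
  congrFun (congrFun hH i) j

theorem IsHerm.add (hadd : ∀ a b : F, (a + b) ^ q = a ^ q + b ^ q) {A B : Matrix m m F}
    (hA : IsHerm q A) (hB : IsHerm q B) : IsHerm q (A + B) := by
  ext i j
  simp only [ctrans, of_apply, Matrix.add_apply, hadd, hA.apply, hB.apply]

theorem IsHerm.sub (hadd : ∀ a b : F, (a + b) ^ q = a ^ q + b ^ q) {A B : Matrix m m F}
    (hA : IsHerm q A) (hB : IsHerm q B) : IsHerm q (A - B) := by
  ext i j
  simp only [ctrans, of_apply, Matrix.sub_apply, sub_pow_of_add_pow hadd, hA.apply, hB.apply]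

theorem IsHerm.smul {A : Matrix m m F} {c : F} (hc : c ^ q = c) (hA : IsHerm q A) :
    IsHerm q (c • A) := by
  ext i j
  simp only [ctrans, of_apply, Matrix.smul_apply, smul_eq_mul, mul_pow, hc, hA.apply]

theorem isHerm_outerq (hqq : ∀ a : F, (a ^ q) ^ q = a) (x : m → F) : IsHerm q (outerq q x) := by
  ext i j
  simp only [ctrans, outerq, of_apply, mul_pow, hqq, mul_comm]

theorem IsHerm.exists_eq_smul_outerq (hqq : ∀ a : F, (a ^ q) ^ q = a) {w t : m → F}
    (h : IsHerm q (vecMulVec w t)) : ∃ a : F, a ^ q = a ∧ vecMulVec w t = a • outerq q w := by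
  rcases eq_or_ne w 0 with rfl | hw
  · exact ⟨1, one_pow q, by ext; simp [vecMulVec, outerq]⟩
  obtain ⟨i₀, hi₀⟩ := Function.ne_iff.mp hw
  have hwt : ∀ i j, w j ^ q * t i ^ q = w i * t j := fun i j => by
    simpa [vecMulVec_apply, mul_pow] using h.apply i j
  have hwq : w i₀ ^ q ≠ 0 := pow_ne_zero q hi₀
  refine ⟨t i₀ ^ q / w i₀, ?_, ext fun i j => ?_⟩
  · rw [div_pow, hqq, div_eq_div_iff hwq hi₀]
    linear_combination -hwt i₀ i₀
  · rw [vecMulVec_apply, Matrix.smul_apply, outerq, of_apply, smul_eq_mul, div_mul_eq_mul_div,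
      eq_div_iff hi₀]
    linear_combination (-w i) * hwt i₀ j

variable [Fintype m] [DecidableEq m]

theorem IsHerm.exists_eq_outerq_of_rank_le_one (hqq : ∀ a : F, (a ^ q) ^ q = a)
    (hnorm : ∀ a : F, a ^ q = a → ∃ b : F, b * b ^ q = a) {H : Matrix m m F}
    (hH : IsHerm q H) (h : H.rank ≤ 1) : ∃ z : m → F, H = outerq q z := by
  obtain ⟨w, t, rfl⟩ := exists_eq_vecMulVec_of_rank_le_one h
  obtain ⟨a, ha, hwt⟩ := hH.exists_eq_smul_outerq hqq
  obtain ⟨b, rfl⟩ := hnorm a ha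
  exact ⟨b • w, by rw [hwt, outerq_smul]⟩

theorem IsHerm.exists_eq_outerq_of_rank_eq_one (hqq : ∀ a : F, (a ^ q) ^ q = a)
    (hnorm : ∀ a : F, a ^ q = a → ∃ b : F, b * b ^ q = a) {H : Matrix m m F}
    (hH : IsHerm q H) (h : H.rank = 1) : ∃ y : m → F, y ≠ 0 ∧ H = outerq q y := by
  obtain ⟨y, rfl⟩ := hH.exists_eq_outerq_of_rank_le_one hqq hnorm h.le
  refine ⟨y, ?_, rfl⟩
  rintro rfl
  rw [outerq_zero, rank_zero] at h
  exact zero_ne_one h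

theorem exists_eq_smul_of_rank_outerq_sub_le_one (hqq : ∀ a : F, (a ^ q) ^ q = a)
    {u v : m → F} (hu : u ≠ 0) (h : (outerq q v - outerq q u).rank ≤ 1) :
    ∃ t : F, v = t • u := by
  -- For independent `u, v`, the columns `v_j^q v - u_j^q u` all lie on one line; comparing
  -- coefficients gives `(v_l u_k)^q = (u_l v_k)^q`, so `v` is a multiple of `u` after all.
  by_contra hcon
  have hind := LinearIndependent.pair_iff.mp <|
    (LinearIndependent.pair_iff' hu).mpr fun t ht => hcon ⟨t, ht.symm⟩
  obtain ⟨w, s, hws⟩ := exists_eq_vecMulVec_of_rank_le_one h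
  have hcol : ∀ j, (-u j ^ q) • u + (v j ^ q) • v = s j • w := fun j => funext fun i => by
    simpa [outerq, vecMulVec_apply, mul_comm, neg_mul, neg_add_eq_sub] using congrFun₂ hws i j
  obtain ⟨k, hk⟩ := Function.ne_iff.mp hu
  have hsk : s k ≠ 0 := fun h0 => pow_ne_zero q hk <| neg_eq_zero.mp <|
    (hind _ _ (by rw [hcol k, h0, zero_smul])).1
  refine hcon ⟨v k / u k, funext fun l => ?_⟩
  have hl := hind (s k * -u l ^ q - s l * -u k ^ q) (s k * v l ^ q - s l * v k ^ q) <| by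
    linear_combination (norm := module) s k • hcol l - s l • hcol k
  have hq : (v l * u k) ^ q = (u l * v k) ^ q := mul_left_cancel₀ hsk <| by
    linear_combination u k ^ q * hl.2 + v k ^ q * hl.1
  have := congrArg (· ^ q) hq
  simp only [hqq] at this
  rw [Pi.smul_apply, smul_eq_mul, div_mul_eq_mul_div, eq_div_iff hk]
  linear_combination this

theorem exists_eq_add_smul_of_rank_sub_le_one (hadd : ∀ a b : F, (a + b) ^ q = a ^ q + b ^ q)
    (hqq : ∀ a : F, (a ^ q) ^ q = a) (hnorm : ∀ a : F, a ^ q = a → ∃ b : F, b * b ^ q = a)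
    {P Q R : Matrix m m F} (hP : IsHerm q P) (hQ : IsHerm q Q) (hR : IsHerm q R)
    (hPQ : (Q - P).rank = 1) (hPR : (R - P).rank ≤ 1) (hQR : (R - Q).rank ≤ 1) :
    ∃ c : F, c ^ q = c ∧ R = P + c • (Q - P) := by
  obtain ⟨y, hy0, hy⟩ := (hQ.sub hadd hP).exists_eq_outerq_of_rank_eq_one hqq hnorm hPQ
  obtain ⟨z, hz⟩ := (hR.sub hadd hP).exists_eq_outerq_of_rank_le_one hqq hnorm hPR
  obtain ⟨t, rfl⟩ := exists_eq_smul_of_rank_outerq_sub_le_one (v := z) hqq hy0 <| by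
    rwa [← hy, ← hz, sub_sub_sub_cancel_right]
  refine ⟨t * t ^ q, by rw [mul_pow, hqq, mul_comm], ?_⟩
  rw [hy, ← outerq_smul, ← hz, add_sub_cancel]

end Hermitian

theorem exists_setOf_sdiff_range_eq_singleton {α : Type*} [Finite α] {p : α → Prop} {a₀ : α}
    (ha₀ : p a₀) {f : {a // p a ∧ a ≠ a₀} → α} (hf : Function.Injective f)
    (hfp : ∀ i, p (f i)) : ∃ d, {a | p a} \ Set.range f = {d} := by
  rw [← Set.ncard_eq_one]
  have hrange : (Set.range f).ncard = ({a | p a} \ {a₀}).ncard := by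
    rw [Set.ncard_range_of_injective hf, ← Nat.card_coe_set_eq]
    rfl
  have hpos : 0 < {a | p a}.ncard := (Set.ncard_pos (Set.toFinite _)).mpr ⟨a₀, ha₀⟩
  rw [Set.ncard_sdiff (t := {a | p a}) (Set.range_subset_iff.mpr hfp), hrange,
    Set.ncard_sdiff_singleton_of_mem (s := {a | p a}) ha₀]
  omega

section Leaf

variable {q : ℕ} {F : Type*} [Field F] {m : Type*}

theorem leafSet_eq_range (A : Matrix m m F) (x : m → F) :
    leafSet q A x = Set.range fun c : {c : F // c ^ q = c ∧ c ≠ 0} => A + c.1 • outerq q x := by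
  ext B
  constructor
  · rintro ⟨c, hc, hc0, rfl⟩
    exact ⟨⟨c, hc, hc0⟩, rfl⟩
  · rintro ⟨⟨c, hc, hc0⟩, rfl⟩
    exact ⟨c, hc, hc0, rfl⟩

theorem center_notMem_leafSet {A : Matrix m m F} {x : m → F} (hx : x ≠ 0) :
    A ∉ leafSet q A x := by
  rintro ⟨c, -, hc0, h⟩
  rw [left_eq_add, smul_eq_zero] at h
  exact h.elim hc0 (outerq_ne_zero hx)

theorem exists_range_add_smul_eq_leafSet [Finite F]
    (hadd : ∀ a b : F, (a + b) ^ q = a ^ q + b ^ q) {c : {a : F // a ^ q = a ∧ a ≠ 0} → F}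
    (hc : Function.Injective c) (hcq : ∀ i, c i ^ q = c i) (P : Matrix m m F) (y : m → F) :
    ∃ d : F, d ^ q = d ∧
      Set.range (fun i => P + c i • outerq q y) = leafSet q (P + d • outerq q y) y := by
  have h0 : (0 : F) ^ q = 0 := by simpa using hadd 0 0
  obtain ⟨d, hd⟩ := exists_setOf_sdiff_range_eq_singleton (p := fun a : F => a ^ q = a) h0 hc hcq
  obtain ⟨hdq, hdc⟩ : d ^ q = d ∧ d ∉ Set.range c := by
    change d ∈ {a | a ^ q = a} \ Set.range c
    rw [hd]
    exact Set.mem_singleton d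
  refine ⟨d, hdq, Set.ext fun B => ⟨?_, ?_⟩⟩
  · rintro ⟨i, rfl⟩
    refine ⟨c i - d, by rw [sub_pow_of_add_pow hadd, hcq, hdq],
      sub_ne_zero.mpr fun h => hdc ⟨i, h⟩, by module⟩
  · rintro ⟨e, he, he0, rfl⟩
    have hde : d + e ∉ {a | a ^ q = a} \ Set.range c := by
      rw [hd, Set.mem_singleton_iff]
      simpa using he0
    obtain ⟨i, hi⟩ : d + e ∈ Set.range c := by
      by_contra h
      exact hde ⟨(by rw [hadd, hdq, he] : (d + e) ^ q = d + e), h⟩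
    exact ⟨i, by dsimp only; rw [hi]; module⟩

theorem rank_add_one_eq_of_forall_mem_leafSet [Fintype m] [DecidableEq m] {μ : F}
    (hμ : μ ^ q = μ) (hμ0 : μ ≠ 0) (hμ1 : μ ≠ 1) {A : Matrix m m F} {x : m → F} {s : ℕ}
    (h : ∀ B ∈ leafSet q A x, B.rank = s) (hA : A.rank ≠ s) : A.rank + 1 = s := by
  have h1 : A + (1 : F) • outerq q x ∈ leafSet q A x := ⟨1, one_pow q, one_ne_zero, rfl⟩
  have hle := rank_le_max_rank_add_smul_vecMulVec A x (x ^ q) hμ1.symm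
  rw [← outerq_eq_vecMulVec, h _ h1, h _ ⟨μ, hμ, hμ0, rfl⟩, max_self] at hle
  have hge := (rank_add_le A ((1 : F) • outerq q x)).trans
    (Nat.add_le_add_left (rank_smul_outerq_le (1 : F) x) _)
  rw [h _ h1] at hge
  omega

theorem eq_of_leafSet_eq (hadd : ∀ a b : F, (a + b) ^ q = a ^ q + b ^ q) {μ : F}
    (hμ : μ ^ q = μ) (hμ0 : μ ≠ 0) (hμ1 : μ ≠ 1) {A A' : Matrix m m F} {x x' : m → F} (hx : x ≠ 0) (hx' : x' ≠ 0)
    (h : leafSet q A x = leafSet q A' x') : A = A' := by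
  obtain ⟨f₁, hf₁, -, e₁⟩ : A + (1 : F) • outerq q x ∈ leafSet q A' x' :=
    h ▸ ⟨1, one_pow q, one_ne_zero, rfl⟩
  obtain ⟨f₂, hf₂, -, e₂⟩ : A + μ • outerq q x ∈ leafSet q A' x' := h ▸ ⟨μ, hμ, hμ0, rfl⟩
  have hdiff : (1 - μ) • outerq q x = (f₁ - f₂) • outerq q x' := by
    linear_combination (norm := module) e₁ - e₂
  have hf : f₁ - f₂ ≠ 0 := by
    intro h0
    rw [h0, zero_smul, smul_eq_zero, sub_eq_zero] at hdiff
    exact hdiff.elim (Ne.symm hμ1) (outerq_ne_zero hx)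
  set k := (f₁ - f₂)⁻¹ * (1 - μ) with hk
  have hx'k : outerq q x' = k • outerq q x := by
    rw [hk, mul_smul, hdiff, inv_smul_smul₀ hf]
  have hA' : A' = A + (1 - f₁ * k) • outerq q x := by
    rw [hx'k, smul_smul] at e₁
    linear_combination (norm := module) -e₁
  by_contra hne
  have hδ : 1 - f₁ * k ≠ 0 := fun h0 => hne (by rw [hA', h0, zero_smul, add_zero])
  have hδq : (1 - f₁ * k) ^ q = 1 - f₁ * k := by
    simp only [hk, sub_pow_of_add_pow hadd, mul_pow, inv_pow, one_pow, hf₁, hf₂, hμ]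
  exact center_notMem_leafSet hx' (h ▸ ⟨_, hδq, hδ, hA'⟩ : A' ∈ leafSet q A' x')

end Leaf

theorem exists_range_eq_of_image_val_eq_range {α ι : Type*} {p : α → Prop}
    {L : Set (Subtype p)} {f : ι → α} (h : Subtype.val '' L = Set.range f) :
    ∃ a : ι → Subtype p, (∀ i, (a i).1 = f i) ∧ L = Set.range a := by
  choose a haL ha using fun i => (h.symm ▸ Set.mem_range_self i : f i ∈ Subtype.val '' L)
  refine ⟨a, ha, Subtype.val_injective.image_injective ?_⟩
  rw [h, ← Set.range_comp]
  exact congrArg Set.range (funext ha).symm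

abbrev HermOfRank (q r : ℕ) (F : Type*) [Field F] (m : Type*) [Fintype m] : Type _ :=
  {A : Matrix m m F // IsHerm q A ∧ A.rank = r}

section Preserver

variable {q r : ℕ} {F : Type*} [Field F] {m : Type*} [Fintype m] [DecidableEq m]
  {Φ : HermOfRank q r F m → HermOfRank q r F m}

theorem rank_map_sub_le_one_iff (hΦ : Function.Injective Φ)
    (hpres : ∀ A B, ((Φ A).1 - (Φ B).1).rank = 1 ↔ (A.1 - B.1).rank = 1) (A B) :
    ((Φ A).1 - (Φ B).1).rank ≤ 1 ↔ (A.1 - B.1).rank ≤ 1 := by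
  have h0 : ((Φ A).1 - (Φ B).1).rank = 0 ↔ (A.1 - B.1).rank = 0 := by
    simp only [Matrix.rank_eq_zero_iff, sub_eq_zero, ← Subtype.ext_iff, hΦ.eq_iff]
  rw [Nat.le_one_iff_eq_zero_or_eq_one, Nat.le_one_iff_eq_zero_or_eq_one, h0, hpres]

theorem exists_range_map_eq_leafSet [Finite F] (hadd : ∀ a b : F, (a + b) ^ q = a ^ q + b ^ q)
    (hqq : ∀ a : F, (a ^ q) ^ q = a) (hnorm : ∀ a : F, a ^ q = a → ∃ b : F, b * b ^ q = a)
    {μ : F} (hμ : μ ^ q = μ) (hμ0 : μ ≠ 0) (hμ1 : μ ≠ 1) {N₀ : Matrix m m F} {x : m → F}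
    (hx : x ≠ 0) {a : {c : F // c ^ q = c ∧ c ≠ 0} → HermOfRank q r F m}
    (ha : ∀ c, (a c).1 = N₀ + c.1 • outerq q x)
    (hΦ : Function.Injective Φ)
    (hadj : ∀ A B, (A.1 - B.1).rank ≤ 1 → ((Φ A).1 - (Φ B).1).rank ≤ 1) :
    ∃ (N : Matrix m m F) (y : m → F), y ≠ 0 ∧ IsHerm q N ∧
      Set.range (fun c => (Φ (a c)).1) = leafSet q N y := by
  set M := fun c => (Φ (a c)).1
  have hM : ∀ c, IsHerm q (M c) := fun c => (Φ (a c)).2.1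
  have hMinj : Function.Injective M := fun c c' h => by
    have := congrArg Subtype.val (hΦ (Subtype.ext h))
    rw [ha, ha, add_right_inj] at this
    exact Subtype.ext (smul_left_injective F (outerq_ne_zero hx) this)
  have hMadj : ∀ c c', (M c - M c').rank ≤ 1 := fun c c' => hadj _ _ <| by
    rw [ha, ha, add_sub_add_left_eq_sub, ← sub_smul]
    exact rank_smul_outerq_le _ _
  let one : {c : F // c ^ q = c ∧ c ≠ 0} := ⟨1, one_pow q, one_ne_zero⟩
  let μ' : {c : F // c ^ q = c ∧ c ≠ 0} := ⟨μ, hμ, hμ0⟩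
  have hMμ : (M μ' - M one).rank = 1 := by
    have : (M μ' - M one).rank ≠ 0 := by
      rw [Ne, Matrix.rank_eq_zero_iff, sub_eq_zero, hMinj.eq_iff]
      exact fun h => hμ1 (congrArg Subtype.val h)
    have := hMadj μ' one
    omega
  choose e he hMe using fun c => exists_eq_add_smul_of_rank_sub_le_one hadd hqq hnorm
    (hM one) (hM μ') (hM c) hMμ (hMadj c one) (hMadj c μ')
  obtain ⟨y, hy0, hy⟩ := ((hM μ').sub hadd (hM one)).exists_eq_outerq_of_rank_eq_one hqq hnorm hMμ
  have he_inj : Function.Injective e := fun c c' h => hMinj (by rw [hMe c, hMe c', h])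
  obtain ⟨d, hd, hT⟩ := exists_range_add_smul_eq_leafSet hadd he_inj he (M one) y
  refine ⟨_, y, hy0, (hM one).add hadd ((isHerm_outerq hqq y).smul hd), ?_⟩
  rw [← hT]
  exact congrArg Set.range (funext fun c => by rw [hMe c, hy])

theorem rank_ne_of_range_map_eq_leafSet (hadd : ∀ a b : F, (a + b) ^ q = a ^ q + b ^ q)
    (hqq : ∀ a : F, (a ^ q) ^ q = a) (hnorm : ∀ a : F, a ^ q = a → ∃ b : F, b * b ^ q = a)
    {μ : F} (hμ : μ ^ q = μ) (hμ0 : μ ≠ 0) (hμ1 : μ ≠ 1) {N₀ : Matrix m m F} {x : m → F}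
    (hx : x ≠ 0) {a : {c : F // c ^ q = c ∧ c ≠ 0} → HermOfRank q r F m}
    (ha : ∀ c, (a c).1 = N₀ + c.1 • outerq q x)
    (hΦ : Function.Surjective Φ)
    (hadj : ∀ A B, ((Φ A).1 - (Φ B).1).rank ≤ 1 → (A.1 - B.1).rank ≤ 1) (hN₀ : N₀.rank ≠ r)
    {N : Matrix m m F} {y : m → F} (hy : y ≠ 0) (hN : IsHerm q N)
    (hT : Set.range (fun c => (Φ (a c)).1) = leafSet q N y) : N.rank ≠ r := by
  intro hNr
  obtain ⟨B, hB⟩ := hΦ ⟨N, hN, hNr⟩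
  have hBa : ∀ c, (B.1 - (a c).1).rank ≤ 1 := fun c => hadj _ _ <| by
    obtain ⟨e, -, -, he⟩ : (Φ (a c)).1 ∈ leafSet q N y := hT ▸ ⟨c, rfl⟩
    rw [hB, he, sub_add_cancel_left, ← neg_smul]
    exact rank_smul_outerq_le _ _
  let one : {c : F // c ^ q = c ∧ c ≠ 0} := ⟨1, one_pow q, one_ne_zero⟩
  let μ' : {c : F // c ^ q = c ∧ c ≠ 0} := ⟨μ, hμ, hμ0⟩
  have hPQ : ((a μ').1 - (a one).1).rank = 1 := by
    rw [ha, ha, add_sub_add_left_eq_sub, ← sub_smul]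
    exact rank_smul_outerq (sub_ne_zero.mpr hμ1) hx
  obtain ⟨c, hc, hBc⟩ := exists_eq_add_smul_of_rank_sub_le_one hadd hqq hnorm
    (a one).2.1 (a μ').2.1 B.2.1 hPQ (hBa one) (hBa μ')
  have hB' : B.1 = N₀ + (1 + c * (μ - 1)) • outerq q x := by
    rw [hBc, ha, ha]
    module
  have hlam0 : 1 + c * (μ - 1) ≠ 0 := fun h0 => by
    rw [h0, zero_smul, add_zero] at hB'
    exact hN₀ (hB' ▸ B.2.2)
  have hlamq : (1 + c * (μ - 1)) ^ q = 1 + c * (μ - 1) := by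
    rw [hadd, mul_pow, sub_pow_of_add_pow hadd, one_pow, hc, hμ]
  refine center_notMem_leafSet hy (hT ▸ ⟨⟨_, hlamq, hlam0⟩, ?_⟩ : N ∈ leafSet q N y)
  have hBeq : B = a ⟨_, hlamq, hlam0⟩ := Subtype.ext (hB'.trans (ha ⟨_, hlamq, hlam0⟩).symm)
  simp only [← hBeq, hB]

end Preserver

theorem stmt4_general (q r n : ℕ) (hq : IsPrimePow q) (hq3 : 3 ≤ q)
    (F : Type*) [Field F] [Fintype F] (hF : Fintype.card F = q ^ 2)
    (Φ : {A : Matrix (Fin n) (Fin n) F // IsHerm q A ∧ A.rank = r} →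
      {A : Matrix (Fin n) (Fin n) F // IsHerm q A ∧ A.rank = r})
    (hbij : Function.Bijective Φ)
    (hpres : ∀ A B : {A : Matrix (Fin n) (Fin n) F // IsHerm q A ∧ A.rank = r},
      ((Φ A).1 - (Φ B).1).rank = 1 ↔ (A.1 - B.1).rank = 1)
    (L : Set {A : Matrix (Fin n) (Fin n) F // IsHerm q A ∧ A.rank = r})
    (hL : ∃ N₀ : Matrix (Fin n) (Fin n) F, IsHerm q N₀ ∧ N₀.rank = r - 1 ∧
      IsLeafOf q (Subtype.val '' L) N₀) :
    ∃! N : Matrix (Fin n) (Fin n) F, IsHerm q N ∧ N.rank = r - 1 ∧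
      IsLeafOf q (Subtype.val '' (Φ '' L)) N := by
  have hadd := add_pow_of_card_eq_sq hq hF
  have hqq := pow_pow_of_card_eq_sq hF
  have hnorm : ∀ a : F, a ^ q = a → ∃ b, b * b ^ q = a :=
    fun _ => exists_mul_pow_eq_of_pow_eq_self hF
  obtain ⟨μ, hμ, hμ0, hμ1⟩ := exists_pow_eq_self_ne_zero_ne_one hF hq3
  have hadj := rank_map_sub_le_one_iff hbij.1 hpres
  obtain ⟨N₀, -, -, x, hx, hLx, hLrank⟩ := hL
  rw [leafSet_eq_range] at hLx
  obtain ⟨a, ha, rfl⟩ := exists_range_eq_of_image_val_eq_range hLx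
  have hr : r = N₀.rank + 1 :=
    (a ⟨μ, hμ, hμ0⟩).2.2.symm.trans (hLrank _ ⟨_, Set.mem_range_self _, rfl⟩)
  obtain ⟨N, y, hy, hN, hT⟩ := exists_range_map_eq_leafSet hadd hqq hnorm hμ hμ0 hμ1 hx ha
    hbij.1 fun A B => (hadj A B).2
  have himage : Subtype.val '' (Φ '' Set.range a) = leafSet q N y := by
    rw [← hT, ← Set.range_comp, ← Set.range_comp]
    rfl
  have hrank : ∀ B ∈ leafSet q N y, B.rank = r := by
    rw [← himage]
    rintro _ ⟨B, -, rfl⟩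
    exact B.2.2
  have hNr : N.rank + 1 = r := rank_add_one_eq_of_forall_mem_leafSet hμ hμ0 hμ1 hrank <|
    rank_ne_of_range_map_eq_leafSet hadd hqq hnorm hμ hμ0 hμ1 hx ha hbij.2
      (fun A B => (hadj A B).1) (by omega) hy hN hT
  refine ⟨N, ⟨hN, by omega, y, hy, himage, fun B hB => (hrank B (himage ▸ hB)).trans hNr.symm⟩, ?_⟩
  rintro N' ⟨-, -, y', hy', hT', -⟩
  exact (eq_of_leafSet_eq hadd hμ hμ0 hμ1 hy hy' (himage ▸ hT')).symm

/-- **Lemma 2.4.** Let `q ≥ 3`, `1 ≤ r ≤ n`, and let `U` be the set of hermitian `n × n`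
matrices of rank `r`.  If `L ⊆ U` is a leaf of some hermitian matrix of rank `r − 1` and
`Φ : U → U` is a bijection preserving adjacency in both directions, then `Φ(L)` is a leaf
of a unique hermitian matrix of rank `r − 1`. -/
theorem stmt4 (q r n : ℕ) (hq : IsPrimePow q) (hq3 : 3 ≤ q) (hr : 1 ≤ r) (hrn : r ≤ n)
    (F : Type*) [Field F] [Fintype F] (hF : Fintype.card F = q ^ 2)
    (Φ : {A : Matrix (Fin n) (Fin n) F // IsHerm q A ∧ A.rank = r} →
      {A : Matrix (Fin n) (Fin n) F // IsHerm q A ∧ A.rank = r})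
    (hbij : Function.Bijective Φ)
    (hpres : ∀ A B : {A : Matrix (Fin n) (Fin n) F // IsHerm q A ∧ A.rank = r},
      ((Φ A).1 - (Φ B).1).rank = 1 ↔ (A.1 - B.1).rank = 1)
    (L : Set {A : Matrix (Fin n) (Fin n) F // IsHerm q A ∧ A.rank = r})
    (hL : ∃ N₀ : Matrix (Fin n) (Fin n) F, IsHerm q N₀ ∧ N₀.rank = r - 1 ∧
      IsLeafOf q (Subtype.val '' L) N₀) :
    ∃! N : Matrix (Fin n) (Fin n) F, IsHerm q N ∧ N.rank = r - 1 ∧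
      IsLeafOf q (Subtype.val '' (Φ '' L)) N :=
  stmt4_general q r n hq hq3 F hF Φ hbij hpres L hL
end

section
/- Let N₁ and N₂ be n×n hermitian matrices over F_{q²}, both of rank n − 1, with rank(N₁ − N₂) = 1. If y ∈ F_{q²}ⁿ is such that {N₁ + λ y y* : λ ∈ F_q, λ ≠ 0} is a leaf of N₁ (i.e., every member is invertible), then {N₂ + λ y y* : λ ∈ F_q, λ ≠ 0} is a leaf of N₂ (i.e., every member is invertible). -/
open Matrix

/-- The sesquilinear form `u* v`. -/
def bil (q : ℕ) {F : Type*} [Field F] {n : ℕ} (u v : Fin n → F) : F :=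
  ∑ i, (u i) ^ q * v i

section Helpers

variable {q : ℕ} {F : Type*} [Field F] {n : ℕ}

/-- `x ↦ x ^ q` as a ring hom (given the additivity hypothesis). -/
def sigmaHom (q : ℕ) (F : Type*) [Field F] (hq0 : q ≠ 0)
    (hadd : ∀ a b : F, (a + b) ^ q = a ^ q + b ^ q) : F →+* F where
  toFun a := a ^ q
  map_one' := one_pow q
  map_mul' a b := mul_pow a b q
  map_zero' := zero_pow hq0
  map_add' := hadd

theorem sigma_sum (hq0 : q ≠ 0) (hadd : ∀ a b : F, (a + b) ^ q = a ^ q + b ^ q)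
    {ι : Type*} (s : Finset ι) (f : ι → F) :
    (∑ i ∈ s, f i) ^ q = ∑ i ∈ s, (f i) ^ q :=
  map_sum (sigmaHom q F hq0 hadd) f s

theorem bil_conj (hq0 : q ≠ 0) (hadd : ∀ a b : F, (a + b) ^ q = a ^ q + b ^ q)
    (hqq : ∀ a : F, (a ^ q) ^ q = a) (u v : Fin n → F) :
    (bil q u v) ^ q = bil q v u := by
  rw [bil, sigma_sum hq0 hadd]
  simp only [mul_pow, hqq, bil]
  exact Finset.sum_congr rfl fun i _ => mul_comm _ _

theorem herm_entry {A : Matrix (Fin n) (Fin n) F} (hA : IsHerm q A) (i j : Fin n) :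
    (A i j) ^ q = A j i := by
  conv_rhs => rw [← hA]
  rfl

theorem bil_zero_right (u : Fin n → F) : bil q u 0 = 0 := by simp [bil]

theorem bil_smul_right (u v : Fin n → F) (k : F) : bil q u (k • v) = k * bil q u v := by
  simp [bil, Finset.mul_sum]; exact Finset.sum_congr rfl fun i _ => by ring

theorem bil_adjoint (hq0 : q ≠ 0) (hadd : ∀ a b : F, (a + b) ^ q = a ^ q + b ^ q)
    {A : Matrix (Fin n) (Fin n) F} (hA : IsHerm q A) (a b : Fin n → F) :
    bil q (A.mulVec a) b = bil q a (A.mulVec b) := by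
  simp only [bil, Matrix.mulVec, dotProduct]
  calc ∑ i, (∑ j, A i j * a j) ^ q * b i
      = ∑ i, ∑ j, (A i j) ^ q * (a j) ^ q * b i := by
        refine Finset.sum_congr rfl fun i _ => ?_
        rw [sigma_sum hq0 hadd, Finset.sum_mul]
        exact Finset.sum_congr rfl fun j _ => by rw [mul_pow]
    _ = ∑ j, ∑ i, (A i j) ^ q * (a j) ^ q * b i := Finset.sum_comm
    _ = ∑ j, (a j) ^ q * ∑ i, A j i * b i := by
        refine Finset.sum_congr rfl fun j _ => ?_
        rw [Finset.mul_sum]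
        refine Finset.sum_congr rfl fun i _ => ?_
        rw [herm_entry hA]; ring

theorem leaf_mulVec (A : Matrix (Fin n) (Fin n) F) (x : Fin n → F) (lam : F) (v : Fin n → F) :
    (A + lam • outerq q x).mulVec v = A.mulVec v + (lam * bil q x v) • x := by
  rw [Matrix.add_mulVec, Matrix.smul_mulVec]
  congr 1
  funext i
  simp only [Pi.smul_apply, smul_eq_mul, Matrix.mulVec, dotProduct, outerq, Matrix.of_apply,
    bil, Finset.mul_sum]
  rw [Finset.sum_mul]
  exact Finset.sum_congr rfl fun j _ => by ring

end Helpers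

section Dim

variable {q : ℕ} {F : Type*} [Field F] {n : ℕ}

theorem exists_ker (A : Matrix (Fin n) (Fin n) F) (h : A.rank < n) :
    ∃ v, v ≠ 0 ∧ A.mulVec v = 0 := by
  have hdet : A.det = 0 := by
    by_contra hd
    have hu : IsUnit A := (Matrix.isUnit_iff_isUnit_det A).mpr (isUnit_iff_ne_zero.mpr hd)
    have := A.rank_of_isUnit hu
    rw [Fintype.card_fin] at this
    omega
  obtain ⟨v, hv0, hv⟩ := Matrix.exists_mulVec_eq_zero_iff.mpr hdet
  exact ⟨v, hv0, hv⟩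

theorem bil_range_ker (hq0 : q ≠ 0) (hadd : ∀ a b : F, (a + b) ^ q = a ^ q + b ^ q)
    {A : Matrix (Fin n) (Fin n) F} (hA : IsHerm q A) {v x : Fin n → F}
    (hv : A.mulVec v = 0) (hx : ∃ a, A.mulVec a = x) : bil q x v = 0 := by
  obtain ⟨a, rfl⟩ := hx
  rw [bil_adjoint hq0 hadd hA, hv, bil_zero_right]

theorem mem_range_of_bil_eq_zero (hq0 : q ≠ 0)
    (hadd : ∀ a b : F, (a + b) ^ q = a ^ q + b ^ q) (hqq : ∀ a : F, (a ^ q) ^ q = a)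
    {A : Matrix (Fin n) (Fin n) F}
    (hA : IsHerm q A) (hr : A.rank = n - 1) (hn : 1 ≤ n)
    {v : Fin n → F} (hv0 : v ≠ 0) (hv : A.mulVec v = 0)
    {x : Fin n → F} (hx : bil q x v = 0) : ∃ a, A.mulVec a = x := by
  classical
  let φ : (Fin n → F) →ₗ[F] F :=
    { toFun := fun z => ∑ i, z i * (v i) ^ q
      map_add' := by intro a b; simp [add_mul, Finset.sum_add_distrib]
      map_smul' := by intro c a; simp [Finset.mul_sum, mul_assoc]
      }
  have hφ : ∀ z : Fin n → F, (φ z) ^ q = bil q z v := by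
    intro z
    rw [show φ z = ∑ i, z i * (v i) ^ q from rfl, sigma_sum hq0 hadd, bil]
    exact Finset.sum_congr rfl fun i _ => by rw [mul_pow, hqq]
  have hφ0 : ∀ z : Fin n → F, φ z = 0 ↔ bil q z v = 0 := by
    intro z
    constructor
    · intro h; rw [← hφ z, h, zero_pow hq0]
    · intro h
      have h2 := hφ z
      rw [h] at h2
      exact (pow_eq_zero_iff hq0).mp h2
  have hφsurj : Function.Surjective φ := by
    obtain ⟨i₀, hi₀⟩ := Function.ne_iff.mp hv0
    intro c
    set s : Fin n → F := Pi.single i₀ (c / (v i₀) ^ q) with hs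
    refine ⟨s, ?_⟩
    have hvq : (v i₀) ^ q ≠ 0 := pow_ne_zero _ (by simpa using hi₀)
    have hc : φ s = ∑ i, s i * (v i) ^ q := rfl
    rw [hc, Finset.sum_eq_single i₀]
    · rw [hs, Pi.single_eq_same, div_mul_cancel₀ _ hvq]
    · intro b _ hb; rw [hs, Pi.single_eq_of_ne hb, zero_mul]
    · intro h; exact absurd (Finset.mem_univ i₀) h
  have hker : Module.finrank F (LinearMap.ker φ) = n - 1 := by
    have h1 := LinearMap.finrank_range_add_finrank_ker φ
    rw [LinearMap.range_eq_top.mpr hφsurj, finrank_top, Module.finrank_self,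
      Module.finrank_pi, Fintype.card_fin] at h1
    omega
  have hle : LinearMap.range A.mulVecLin ≤ LinearMap.ker φ := by
    rintro z ⟨a, rfl⟩
    rw [LinearMap.mem_ker, hφ0]
    exact bil_range_ker hq0 hadd hA hv ⟨a, by simp [Matrix.mulVecLin_apply]⟩
  have heq : LinearMap.range A.mulVecLin = LinearMap.ker φ :=
    Submodule.eq_of_le_of_finrank_eq hle (by rw [hker]; exact hr)
  have hxm : x ∈ LinearMap.ker φ := by rw [LinearMap.mem_ker, hφ0]; exact hx
  rw [← heq] at hxm
  obtain ⟨a, ha⟩ := hxm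
  exact ⟨a, by simpa [Matrix.mulVecLin_apply] using ha⟩

theorem ker_eq_span {A : Matrix (Fin n) (Fin n) F} (hr : A.rank = n - 1) (hn : 1 ≤ n)
    {v₁ : Fin n → F} (hv₁0 : v₁ ≠ 0) (hv₁ : A.mulVec v₁ = 0)
    {w : Fin n → F} (hw : A.mulVec w = 0) : ∃ k : F, w = k • v₁ := by
  have h1 := LinearMap.finrank_range_add_finrank_ker A.mulVecLin
  rw [Module.finrank_pi, Fintype.card_fin] at h1
  have hrk : Module.finrank F (LinearMap.range A.mulVecLin) = n - 1 := hr
  have hkd : Module.finrank F (LinearMap.ker A.mulVecLin) = 1 := by omega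
  have hsp : Submodule.span F {v₁} ≤ LinearMap.ker A.mulVecLin :=
    Submodule.span_le.mpr (by
      simp only [Set.singleton_subset_iff, SetLike.mem_coe, LinearMap.mem_ker,
        Matrix.mulVecLin_apply]
      exact hv₁)
  have heq := Submodule.eq_of_le_of_finrank_eq hsp
    (by rw [finrank_span_singleton hv₁0, hkd])
  have hwmem : w ∈ Submodule.span F {v₁} := by
    rw [heq]
    exact LinearMap.mem_ker.mpr (by simpa [Matrix.mulVecLin_apply] using hw)
  obtain ⟨k, hk⟩ := Submodule.mem_span_singleton.mp hwmem
  exact ⟨k, hk.symm⟩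

theorem rank_one_parallel {D : Matrix (Fin n) (Fin n) F} (h1 : D.rank = 1)
    {m : Fin n → F} (hm : D.mulVec m ≠ 0) (w : Fin n → F) :
    ∃ γ : F, D.mulVec w = γ • D.mulVec m := by
  have hsp : Submodule.span F {D.mulVec m} ≤ LinearMap.range D.mulVecLin :=
    Submodule.span_le.mpr (by
      simp only [Set.singleton_subset_iff, SetLike.mem_coe, LinearMap.mem_range]
      exact ⟨m, by simp [Matrix.mulVecLin_apply]⟩)
  have heq := Submodule.eq_of_le_of_finrank_eq hsp
    (by rw [finrank_span_singleton hm]; exact h1.symm)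
  have hwmem : D.mulVec w ∈ Submodule.span F {D.mulVec m} := by
    rw [heq]
    exact ⟨w, by simp [Matrix.mulVecLin_apply]⟩
  obtain ⟨γ, hγ⟩ := Submodule.mem_span_singleton.mp hwmem
  exact ⟨γ, hγ.symm⟩

end Dim

theorem bil_zero_left (hq0 : q ≠ 0) {F : Type*} [Field F] {n : ℕ} (u : Fin n → F) :
    bil q (0 : Fin n → F) u = 0 := by
  simp [bil, zero_pow hq0]

theorem stmt12' (q n : ℕ) (hq : IsPrimePow q)
    (F : Type*) [Field F] [Fintype F] (hF : Fintype.card F = q ^ 2)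
    (N₁ N₂ : Matrix (Fin n) (Fin n) F)
    (hN₁H : IsHerm q N₁) (hN₂H : IsHerm q N₂)
    (hN₁r : N₁.rank = n - 1) (hN₂r : N₂.rank = n - 1)
    (hadj : (N₁ - N₂).rank = 1)
    (y : Fin n → F) (hy : y ≠ 0)
    (hleaf : ∀ lam : F, lam ^ q = lam → lam ≠ 0 → IsUnit (N₁ + lam • outerq q y)) :
    ∀ lam : F, lam ^ q = lam → lam ≠ 0 → IsUnit (N₂ + lam • outerq q y) := by
  classical
  have hq0 : q ≠ 0 := hq.pos.ne'
  obtain ⟨p, k, hp, hk, hpk⟩ := hq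
  have hpp : Nat.Prime p := Nat.prime_iff.mpr hp
  haveI hfp : Fact p.Prime := ⟨hpp⟩
  obtain ⟨p', hcp'⟩ := CharP.exists F
  haveI := hcp'
  obtain ⟨m₀, hm₀p, hcard⟩ := FiniteField.card F p'
  have hp' : p' = p := by
    have h1 : p' ^ (m₀ : ℕ) = p ^ (k * 2) := by
      rw [← hcard, hF, ← hpk, ← pow_mul]
    have hd : p' ∣ p ^ (k * 2) := h1 ▸ dvd_pow_self p' m₀.pos.ne'
    exact (Nat.prime_dvd_prime_iff_eq hm₀p hpp).mp (hm₀p.dvd_of_dvd_pow hd)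
  subst hp'
  have hadd : ∀ a b : F, (a + b) ^ q = a ^ q + b ^ q := by
    intro a b
    rw [← hpk]
    exact add_pow_char_pow a b p' k
  have hqq : ∀ a : F, (a ^ q) ^ q = a := by
    intro a
    have h1 : a ^ Fintype.card F = a := FiniteField.pow_card a
    rw [hF] at h1
    rw [← pow_mul, ← sq]
    exact h1
  intro lam hlamq hlam0
  by_contra hns
  have hn : 1 ≤ n := by
    obtain ⟨i, -⟩ := Function.ne_iff.mp hy
    exact i.pos
  have hdet2 : (N₂ + lam • outerq q y).det = 0 := by
    by_contra hd
    exact hns ((Matrix.isUnit_iff_isUnit_det _).mpr (isUnit_iff_ne_zero.mpr hd))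
  obtain ⟨v, hv0, hvker⟩ := Matrix.exists_mulVec_eq_zero_iff.mpr hdet2
  rw [leaf_mulVec] at hvker
  have hN₂v : N₂.mulVec v = (-(lam * bil q y v)) • y := by
    rw [neg_smul]
    exact eq_neg_of_add_eq_zero_left hvker
  obtain ⟨v₁, hv₁0, hv₁⟩ := exists_ker N₁ (by rw [hN₁r]; omega)
  have hM₁ := hleaf lam hlamq hlam0
  have hM₁inj : ∀ w : Fin n → F, (N₁ + lam • outerq q y).mulVec w = 0 → w = 0 := by
    intro w hw
    by_contra hw0
    have hd0 : (N₁ + lam • outerq q y).det = 0 :=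
      Matrix.exists_mulVec_eq_zero_iff.mp ⟨w, hw0, hw⟩
    exact isUnit_iff_ne_zero.mp ((Matrix.isUnit_iff_isUnit_det _).mp hM₁) hd0
  have hc₁ : bil q y v₁ ≠ 0 := by
    intro h0
    apply hv₁0
    apply hM₁inj
    rw [leaf_mulVec, hv₁, h0, mul_zero, zero_smul, add_zero]
  have hynr : ¬ ∃ a, N₁.mulVec a = y := fun ha =>
    hc₁ (bil_range_ker hq0 hadd hN₁H hv₁ ha)
  have hym : ∃ m, N₂.mulVec m = y := by
    by_cases hc : bil q y v = 0
    · have hker2 : N₂.mulVec v = 0 := by rw [hN₂v, hc, mul_zero, neg_zero, zero_smul]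
      exact mem_range_of_bil_eq_zero hq0 hadd hqq hN₂H hN₂r hn hv0 hker2 hc
    · have hne : -(lam * bil q y v) ≠ 0 := by
        simp only [ne_eq, neg_eq_zero, mul_eq_zero, not_or]
        exact ⟨hlam0, hc⟩
      refine ⟨(-(lam * bil q y v))⁻¹ • v, ?_⟩
      rw [Matrix.mulVec_smul, hN₂v, smul_smul, inv_mul_cancel₀ hne, one_smul]
  obtain ⟨m, hm⟩ := hym
  set D := N₁ - N₂ with hD
  have hsub : ∀ a b : F, (a - b) ^ q = a ^ q - b ^ q := fun a b =>
    map_sub (sigmaHom q F hq0 hadd) a b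
  have hDherm : IsHerm q D := by
    show ctrans q D = D
    ext i j
    show (D j i) ^ q = D i j
    rw [hD]
    show (N₁ j i - N₂ j i) ^ q = N₁ i j - N₂ i j
    rw [hsub, herm_entry hN₁H, herm_entry hN₂H]
  have hDmul : ∀ w, D.mulVec w = N₁.mulVec w - N₂.mulVec w := fun w =>
    Matrix.sub_mulVec N₁ N₂ w
  have hu0 : D.mulVec m ≠ 0 := by
    intro h0
    apply hynr
    refine ⟨m, ?_⟩
    have h1 := hDmul m
    rw [h0] at h1
    rw [← hm]
    exact (sub_eq_zero.mp h1.symm)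
  have hunr : ¬ ∃ a, N₁.mulVec a = D.mulVec m := by
    rintro ⟨t, ht⟩
    apply hynr
    refine ⟨m - t, ?_⟩
    calc N₁.mulVec (m - t) = N₁.mulVec m - N₁.mulVec t := Matrix.mulVec_sub N₁ m t
      _ = N₁.mulVec m - (N₁.mulVec m - N₂.mulVec m) := by rw [ht, hDmul]
      _ = N₂.mulVec m := sub_sub_cancel _ _
      _ = y := hm
  have hbu : bil q (D.mulVec m) v₁ ≠ 0 := fun h0 =>
    hunr (mem_range_of_bil_eq_zero hq0 hadd hqq hN₁H hN₁r hn hv₁0 hv₁ h0)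
  obtain ⟨v₂, hv₂0, hv₂⟩ := exists_ker N₂ (by rw [hN₂r]; omega)
  obtain ⟨γ, hγ⟩ := rank_one_parallel hadj hu0 v₂
  by_cases hγ0 : γ = 0
  · have hDv₂ : D.mulVec v₂ = 0 := by rw [hγ, hγ0, zero_smul]
    have hN₁v₂ : N₁.mulVec v₂ = 0 := by
      have h1 := hDmul v₂
      rw [hDv₂, hv₂, sub_zero] at h1
      exact h1.symm
    obtain ⟨kk, hkk⟩ := ker_eq_span hN₁r hn hv₁0 hv₁ hN₁v₂
    have hkk0 : kk ≠ 0 := by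
      rintro rfl
      rw [zero_smul] at hkk
      exact hv₂0 hkk
    have hDv₁ : D.mulVec v₁ = 0 := by
      have h2 : D.mulVec v₂ = kk • D.mulVec v₁ := by rw [hkk, Matrix.mulVec_smul]
      rw [hDv₂] at h2
      rcases smul_eq_zero.mp h2.symm with h | h
      · exact absurd h hkk0
      · exact h
    have h3 : bil q v₁ (D.mulVec m) = 0 := by
      rw [← bil_adjoint hq0 hadd hDherm, hDv₁, bil_zero_left hq0]
    have h4 : (bil q (D.mulVec m) v₁) ^ q = 0 := by
      rw [bil_conj hq0 hadd hqq, h3]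
    exact hbu ((pow_eq_zero_iff hq0).mp h4)
  · apply hunr
    refine ⟨γ⁻¹ • v₂, ?_⟩
    have h5 : N₁.mulVec v₂ = γ • D.mulVec m := by
      have h1 := hDmul v₂
      rw [hv₂, sub_zero] at h1
      rw [← h1, hγ]
    rw [Matrix.mulVec_smul, h5, smul_smul, inv_mul_cancel₀ hγ0, one_smul]

/-- **Lemma 3.6.** Let `N₁, N₂` be hermitian of rank `n − 1` with `rank (N₁ − N₂) = 1`.
If `{N₁ + λ y y* : 0 ≠ λ ∈ F_q}` is a leaf of `N₁` (all members invertible), then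
`{N₂ + λ y y* : 0 ≠ λ ∈ F_q}` is a leaf of `N₂` (all members invertible). -/
theorem stmt12 (q n : ℕ) (hq : IsPrimePow q)
    (F : Type*) [Field F] [Fintype F] (hF : Fintype.card F = q ^ 2)
    (N₁ N₂ : Matrix (Fin n) (Fin n) F)
    (hN₁H : IsHerm q N₁) (hN₂H : IsHerm q N₂)
    (hN₁r : N₁.rank = n - 1) (hN₂r : N₂.rank = n - 1)
    (hadj : (N₁ - N₂).rank = 1)
    (y : Fin n → F) (hy : y ≠ 0)
    (hleaf : ∀ lam : F, lam ^ q = lam → lam ≠ 0 → IsUnit (N₁ + lam • outerq q y)) :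
    ∀ lam : F, lam ^ q = lam → lam ≠ 0 → IsUnit (N₂ + lam • outerq q y) :=
  stmt12' q n hq F hF N₁ N₂ hN₁H hN₂H hN₁r hN₂r hadj y hy hleaf
end

section
/- Let q ≥ 3 be a power of a prime, n ≥ 2, and 1 ≤ k ≤ n − 2. Consider the graph whose vertices are the n×n hermitian matrices over F_{q²} of rank k, with an edge between A and B exactly when rank(A − B) = 1. Its connected components are precisely the sets {P(Ẋ ⊕ 0_{n−k})P* : Ẋ ∈ HGL_k(F_{q²})} where P ranges over invertible n×n matrices over F_{q²}, and the number of components equals the number of k-dimensional linear subspaces of F_{q²}ⁿ, i.e., the Gaussian binomial coefficient [n choose k] with parameter q². -/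
open Matrix

/-- The graph on the hermitian `ι × ι` matrices of rank `r`, with edges given by
rank-one differences. -/
def rkGraph (q : ℕ) {F : Type*} [Field F] (ι : Type*) [Fintype ι] (r : ℕ) :
    SimpleGraph {A : Matrix ι ι F // IsHerm q A ∧ A.rank = r} :=
  SimpleGraph.fromRel fun A B => (A.1 - B.1).rank = 1

/-!
Write `x̄ = x ^ q`. Two adjacent vertices `A`, `B` have the same column space: their hermitian
rank-one difference is `λ x x*`, and if `x ∉ col B` then some `v ∈ ker B` has `x* v ≠ 0`, so
`A v` is a nonzero multiple of `x` and `col B ≤ col A`; equal ranks then give equality.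

Conversely, if `col A = col B = col C` for a matrix `C` of full column rank `r`, then
`A = C X C*` and `B = C Y C*` with `X, Y ∈ HGL_r`, and `X ↦ C X C*` is a graph homomorphism, so
it suffices that the graph on `HGL_r` is connected. For `X ≠ Y` there, put `S = X - Y` and
`T = S - S X⁻¹ S`. Since `2q + 1 < q²`, some `w` has `w* S w ≠ 0` and `w* T w ≠ 0`; then the
Wedderburn reduction `Z = X - (w* S w)⁻¹ (S w)(S w)*` is invertible (by the matrix determinant
lemma, as `w* T w ≠ 0`), adjacent to `X`, and `rank (Z - Y) = rank (X - Y) - 1`.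

So components correspond to the `k`-dimensional subspaces, and the subspace of
`P (Ẋ ⊕ 0) P*` is the span of the first `k` columns of `P`.
-/

structure IsFrobInvolution (q : ℕ) (F : Type*) [Field F] : Prop where
  add_pow : ∀ x y : F, (x + y) ^ q = x ^ q + y ^ q
  pow_pow : ∀ x : F, (x ^ q) ^ q = x

theorem isFrobInvolution_of_card {q : ℕ} {F : Type*} [Field F] [Fintype F]
    (hF : Fintype.card F = q ^ 2) : IsFrobInvolution q F := by
  obtain ⟨n, hp, hcard⟩ := FiniteField.card F (ringChar F)
  have : Fact (ringChar F).Prime := ⟨hp⟩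
  have hq : q ∣ ringChar F ^ (n : ℕ) := hcard ▸ hF ▸ dvd_pow_self q two_ne_zero
  obtain ⟨a, -, rfl⟩ := (Nat.dvd_prime_pow hp).1 hq
  refine ⟨fun x y => add_pow_char_pow x y (ringChar F) a, fun x => ?_⟩
  rw [← pow_mul, ← sq, ← hF]
  exact FiniteField.pow_card x

namespace IsFrobInvolution

variable {q : ℕ} {F : Type*} [Field F] (hG : IsFrobInvolution q F)
include hG

lemma ne_zero : q ≠ 0 := by
  rintro rfl
  simpa using hG.pow_pow 0

def ringHom : F →+* F where
  toFun x := x ^ q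
  map_one' := one_pow q
  map_mul' x y := mul_pow x y q
  map_zero' := zero_pow hG.ne_zero
  map_add' := hG.add_pow

lemma pi_pow_pow {ι : Type*} (x : ι → F) : (x ^ q) ^ q = x := funext fun i => hG.pow_pow (x i)

lemma pi_pow_eq_zero_iff {ι : Type*} {x : ι → F} : x ^ q = 0 ↔ x = 0 := by
  simp [funext_iff, pow_eq_zero_iff hG.ne_zero]

lemma pi_add_pow {ι : Type*} (x y : ι → F) : (x + y) ^ q = x ^ q + y ^ q :=
  funext fun i => hG.add_pow (x i) (y i)

lemma ctrans_eq {m n : Type*} (A : Matrix m n F) : ctrans q A = (A.map hG.ringHom)ᵀ := rfl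

lemma ctrans_mul {l m n : Type*} [Fintype m] (A : Matrix l m F) (B : Matrix m n F) :
    ctrans q (A * B) = ctrans q B * ctrans q A := by
  simp only [hG.ctrans_eq, Matrix.map_mul, transpose_mul]

lemma ctrans_ctrans {m n : Type*} (A : Matrix m n F) : ctrans q (ctrans q A) = A := by
  ext i j
  exact hG.pow_pow _

lemma ctrans_sub {m n : Type*} (A B : Matrix m n F) :
    ctrans q (A - B) = ctrans q A - ctrans q B := by
  ext i j
  exact map_sub hG.ringHom (A j i) (B j i)

lemma ctrans_one {n : Type*} [DecidableEq n] : ctrans q (1 : Matrix n n F) = 1 := by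
  simp only [hG.ctrans_eq, Matrix.map_one _ (map_zero _) (map_one _), transpose_one]

lemma pow_mulVec {m n : Type*} [Fintype n] (M : Matrix m n F) (v : n → F) :
    (M *ᵥ v) ^ q = v ^ q ᵥ* ctrans q M := by
  ext i
  rw [hG.ctrans_eq, vecMul_transpose]
  exact hG.ringHom.map_mulVec M v i

lemma dotProduct_pow {n : Type*} [Fintype n] (u v : n → F) :
    (u ⬝ᵥ v) ^ q = u ^ q ⬝ᵥ v ^ q :=
  hG.ringHom.map_dotProduct u v

end IsFrobInvolution

namespace IsHerm

variable {q : ℕ} {F : Type*} [Field F] {n : Type*} [Fintype n] {S : Matrix n n F}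

lemma nonsing_inv [DecidableEq n] (hG : IsFrobInvolution q F) (hS : IsHerm q S)
    (hu : IsUnit S) : IsHerm q S⁻¹ := by
  have h := congrArg (ctrans q) (mul_nonsing_inv S ((isUnit_iff_isUnit_det S).1 hu))
  rw [hG.ctrans_mul, hS, hG.ctrans_one] at h
  exact (inv_eq_left_inv h).symm

lemma pow_mulVec (hG : IsFrobInvolution q F) (hS : IsHerm q S) (v : n → F) :
    (S *ᵥ v) ^ q = v ^ q ᵥ* S := by
  rw [hG.pow_mulVec, hS]

lemma pow_dotProduct_mulVec (hG : IsFrobInvolution q F) (hS : IsHerm q S) (u v : n → F) :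
    (u ^ q ⬝ᵥ S *ᵥ v) ^ q = v ^ q ⬝ᵥ S *ᵥ u := by
  rw [hG.dotProduct_pow, hG.pi_pow_pow, hS.pow_mulVec hG, dotProduct_comm, dotProduct_mulVec]

end IsHerm

section Anisotropic

open Polynomial

variable {q : ℕ} {F : Type*} [Field F]

lemma exists_eval_ne_zero_and_eval_ne_zero [Fintype F] {p₁ p₂ : F[X]} (h₁ : p₁ ≠ 0)
    (h₂ : p₂ ≠ 0) (hdeg : p₁.natDegree + p₂.natDegree < Fintype.card F) :
    ∃ t, p₁.eval t ≠ 0 ∧ p₂.eval t ≠ 0 := by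
  obtain ⟨t, ht⟩ :=
    (p₁ * p₂).exists_eval_ne_zero_of_natDegree_lt_card (mul_ne_zero h₁ h₂)
    (by rw [Cardinal.mk_fintype, natDegree_mul h₁ h₂]; exact_mod_cast hdeg)
  exact ⟨t, by simpa [not_or] using ht⟩

lemma exists_add_pow_ne_zero [Fintype F] (hq : 2 ≤ q) (hF : Fintype.card F = q ^ 2) :
    ∃ t : F, t + t ^ q ≠ 0 := by
  have hne : (X + X ^ q : F[X]) ≠ 0 := by
    intro h
    have h1q : (1 : ℕ) ≠ q := by omega
    simpa [coeff_X, h1q] using congrArg (coeff · q) h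
  obtain ⟨t, ht⟩ := (X + X ^ q : F[X]).exists_eval_ne_zero_of_natDegree_lt_card hne (by
    rw [Cardinal.mk_fintype, hF]
    have : (X + X ^ q : F[X]).natDegree ≤ q := by
      compute_degree!
      omega
    exact_mod_cast this.trans_lt (by nlinarith))
  exact ⟨t, by simpa using ht⟩

variable {n : Type*} [Fintype n] {S T : Matrix n n F}

lemma IsHerm.form_add_smul (hG : IsFrobInvolution q F) (hS : IsHerm q S) (u v : n → F) (t : F) :
    (u + t • v) ^ q ⬝ᵥ S *ᵥ (u + t • v) =
      u ^ q ⬝ᵥ S *ᵥ u + t * (u ^ q ⬝ᵥ S *ᵥ v)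
      + (t * (u ^ q ⬝ᵥ S *ᵥ v)) ^ q + t ^ (q + 1) * (v ^ q ⬝ᵥ S *ᵥ v) := by
  rw [hG.pi_add_pow, _root_.smul_pow, ← hS.pow_dotProduct_mulVec hG v u]
  simp only [mulVec_add, mulVec_smul, add_dotProduct, dotProduct_add, smul_dotProduct,
    dotProduct_smul, smul_eq_mul, mul_pow, hS.pow_dotProduct_mulVec hG]
  ring

lemma IsHerm.exists_form_ne_zero (hG : IsFrobInvolution q F) (htr : ∃ t : F, t + t ^ q ≠ 0)
    (hS : IsHerm q S) (hS0 : S ≠ 0) : ∃ w, w ^ q ⬝ᵥ S *ᵥ w ≠ 0 := by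
  classical
  by_contra! h
  obtain ⟨t, ht⟩ := htr
  obtain ⟨i, j, hij⟩ : ∃ i j, S i j ≠ 0 := by
    by_contra! h0
    exact hS0 (Matrix.ext h0)
  have hsingle : (Pi.single i 1 : n → F) ^ q = Pi.single i 1 := by
    ext k
    by_cases hk : k = i <;> simp [hk, zero_pow hG.ne_zero]
  have key := hS.form_add_smul hG (Pi.single i 1) (Pi.single j 1) (t / S i j)
  rw [h, h, h, hsingle, mulVec_single_one, single_dotProduct, one_mul, col_apply,
    div_mul_cancel₀ _ hij] at key
  exact ht (by linear_combination -key)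

lemma IsHerm.exists_form_ne_zero_and_form_ne_zero [Fintype F] (hG : IsFrobInvolution q F)
    (hq : 3 ≤ q) (hF : Fintype.card F = q ^ 2) (hS : IsHerm q S) (hT : IsHerm q T)
    (hS0 : S ≠ 0) (hT0 : T ≠ 0) :
    ∃ w, w ^ q ⬝ᵥ S *ᵥ w ≠ 0 ∧ w ^ q ⬝ᵥ T *ᵥ w ≠ 0 := by
  have htr := exists_add_pow_ne_zero (by omega) hF
  obtain ⟨u, hu⟩ := hS.exists_form_ne_zero hG htr hS0
  obtain ⟨v, hv⟩ := hT.exists_form_ne_zero hG htr hT0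
  by_cases hTu : u ^ q ⬝ᵥ T *ᵥ u ≠ 0
  · exact ⟨u, hu, hTu⟩
  by_cases hSv : v ^ q ⬝ᵥ S *ᵥ v ≠ 0
  · exact ⟨v, hSv, hv⟩
  push Not at hTu hSv
  -- along the line `u + t v` both forms are polynomials in `t`, of degrees `q` and `q + 1`
  set b := u ^ q ⬝ᵥ S *ᵥ v
  set c := u ^ q ⬝ᵥ T *ᵥ v
  set p₁ : F[X] := C (u ^ q ⬝ᵥ S *ᵥ u) + C b * X + C (b ^ q) * X ^ q
  set p₂ : F[X] := C c * X + C (c ^ q) * X ^ q + C (v ^ q ⬝ᵥ T *ᵥ v) * X ^ (q + 1)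
  have hp₁ : p₁ ≠ 0 := fun h => hu (by
    simpa [p₁, coeff_X, hG.ne_zero.symm] using congrArg (coeff · 0) h)
  have hp₂ : p₂ ≠ 0 := fun h => hv (by
    simpa only [p₂, coeff_add, coeff_C_mul, coeff_X, coeff_X_pow, coeff_zero, if_neg
      (by omega : 1 ≠ q + 1), if_neg (by omega : q + 1 ≠ q), ↓reduceIte, mul_zero, mul_one,
      zero_add] using congrArg (coeff · (q + 1)) h)
  have hdeg : p₁.natDegree + p₂.natDegree < Fintype.card F := by
    have h₁ : p₁.natDegree ≤ q := by
      simp only [p₁]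
      compute_degree!
      omega
    have h₂ : p₂.natDegree ≤ q + 1 := by
      simp only [p₂]
      compute_degree!
    rw [hF]
    nlinarith
  obtain ⟨t, ht₁, ht₂⟩ := exists_eval_ne_zero_and_eval_ne_zero hp₁ hp₂ hdeg
  refine ⟨u + t • v, ?_, ?_⟩
  · rw [hS.form_add_smul hG, hSv, mul_zero, add_zero]
    convert ht₁ using 1
    simp only [p₁, eval_add, eval_mul, eval_C, eval_X, eval_pow, map_pow, mul_pow]
    ring
  · rw [hT.form_add_smul hG, hTu, zero_add]
    convert ht₂ using 1
    simp only [p₂, eval_add, eval_mul, eval_C, eval_X, eval_pow, map_pow, mul_pow]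
    ring

end Anisotropic

section RankOne

variable {F : Type*} [Field F] {m n : Type*} [Fintype n]

lemma Matrix.eq_zero_of_rank_eq_zero [DecidableEq n] {M : Matrix m n F} (h : M.rank = 0) :
    M = 0 := by
  rw [Matrix.rank, Submodule.finrank_eq_zero, LinearMap.range_eq_bot, ← Matrix.toLin'_apply'] at h
  exact Matrix.toLin'.map_eq_zero_iff.1 h

/-- Wedderburn's rank-one reduction. -/
theorem Matrix.rank_sub_smul_vecMulVec_add_one [Fintype m] {M : Matrix m n F} {u : n → F}
    {y : m → F} (hc : y ⬝ᵥ M *ᵥ u ≠ 0) :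
    (M - (y ⬝ᵥ M *ᵥ u)⁻¹ • vecMulVec (M *ᵥ u) (y ᵥ* M)).rank + 1 = M.rank := by
  set c := y ⬝ᵥ M *ᵥ u
  set M' := M - c⁻¹ • vecMulVec (M *ᵥ u) (y ᵥ* M)
  have hM' : ∀ v, M' *ᵥ v = M *ᵥ v - (c⁻¹ * (y ⬝ᵥ M *ᵥ v)) • M *ᵥ u := by
    intro v
    simp [M', sub_mulVec, smul_mulVec, vecMulVec_mulVec, dotProduct_mulVec, mul_smul]
  have hu : u ∉ LinearMap.ker M.mulVecLin := fun h => hc (by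
    rw [LinearMap.mem_ker, mulVecLin_apply] at h
    show y ⬝ᵥ M *ᵥ u = 0
    rw [h, dotProduct_zero])
  have hker : LinearMap.ker M'.mulVecLin = LinearMap.ker M.mulVecLin ⊔ Submodule.span F {u} := by
    apply le_antisymm
    · intro v hv
      rw [LinearMap.mem_ker, mulVecLin_apply, hM', sub_eq_zero] at hv
      refine Submodule.mem_sup.2 ⟨v - (c⁻¹ * (y ⬝ᵥ M *ᵥ v)) • u, ?_, _,
        Submodule.smul_mem _ _ (Submodule.mem_span_singleton_self u), sub_add_cancel _ _⟩
      rw [LinearMap.mem_ker, mulVecLin_apply, mulVec_sub, mulVec_smul]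
      exact sub_eq_zero.2 hv
    · refine sup_le (fun v hv => ?_) ((Submodule.span_singleton_le_iff_mem _ _).2 ?_)
      · rw [LinearMap.mem_ker, mulVecLin_apply] at hv ⊢
        rw [hM', hv, dotProduct_zero, mul_zero, zero_smul, sub_zero]
      · rw [LinearMap.mem_ker, mulVecLin_apply, hM', inv_mul_cancel₀ hc, one_smul, sub_self]
  have h₁ := LinearMap.finrank_range_add_finrank_ker M.mulVecLin
  have h₂ := LinearMap.finrank_range_add_finrank_ker M'.mulVecLin
  rw [hker, Submodule.finrank_sup_span_singleton hu] at h₂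
  rw [Matrix.rank, Matrix.rank]
  omega

lemma Matrix.mem_range_mulVecLin_transpose_iff [Fintype m] [DecidableEq m] [DecidableEq n]
    (M : Matrix m n F) (u : n → F) :
    u ∈ LinearMap.range Mᵀ.mulVecLin ↔ ∀ v, M *ᵥ v = 0 → u ⬝ᵥ v = 0 := by
  have hdual : ∀ w,
      dotProductEquiv F n (Mᵀ *ᵥ w) = M.mulVecLin.dualMap (dotProductEquiv F m w) := by
    intro w
    refine LinearMap.ext fun v => ?_
    simp [mulVec_transpose, dotProduct_mulVec]
  constructor
  · rintro ⟨w, rfl⟩ v hv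
    rw [mulVecLin_apply, mulVec_transpose, ← dotProduct_mulVec, hv, dotProduct_zero]
  · intro h
    obtain ⟨φ, hφ⟩ : dotProductEquiv F n u ∈ LinearMap.range M.mulVecLin.dualMap := by
      rw [LinearMap.range_dualMap_eq_dualAnnihilator_ker, Submodule.mem_dualAnnihilator]
      exact fun v hv => h v hv
    refine ⟨(dotProductEquiv F m).symm φ, (dotProductEquiv F n).injective ?_⟩
    rw [mulVecLin_apply, hdual, LinearEquiv.apply_symm_apply, hφ]

end RankOne

namespace IsHerm

variable {q : ℕ} {F : Type*} [Field F] {n : Type*} [Fintype n] [DecidableEq n]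
  {A B M : Matrix n n F}

lemma mem_range_iff (hG : IsFrobInvolution q F) (hB : IsHerm q B) (x : n → F) :
    x ∈ LinearMap.range B.mulVecLin ↔ ∀ v, B *ᵥ v = 0 → x ^ q ⬝ᵥ v = 0 := by
  have hsurj : Function.Surjective fun v : n → F => v ^ q :=
    Function.Involutive.surjective hG.pi_pow_pow
  nth_rewrite 1 [← hB]
  rw [hG.ctrans_eq, mem_range_mulVecLin_transpose_iff, hsurj.forall]
  refine forall_congr' fun v => imp_congr ?_ ?_
  · rw [show B.map hG.ringHom *ᵥ v ^ q = (B *ᵥ v) ^ q from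
      funext fun i => (hG.ringHom.map_mulVec B v i).symm, hG.pi_pow_eq_zero_iff]
  · rw [← pow_eq_zero_iff hG.ne_zero, hG.dotProduct_pow, hG.pi_pow_pow]

lemma range_add_smul_vecMulVec_le_or_ge (hG : IsFrobInvolution q F) (hB : IsHerm q B)
    (c : F) (x : n → F) :
    LinearMap.range (B + c • vecMulVec x (x ^ q)).mulVecLin ≤ LinearMap.range B.mulVecLin ∨
      LinearMap.range B.mulVecLin ≤
        LinearMap.range (B + c • vecMulVec x (x ^ q)).mulVecLin := by
  set A := B + c • vecMulVec x (x ^ q)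
  have hA : ∀ v, A *ᵥ v = B *ᵥ v + (c * (x ^ q ⬝ᵥ v)) • x := by
    intro v
    simp [A, add_mulVec, smul_mulVec, vecMulVec_mulVec, mul_smul]
  by_cases hx : x ∈ LinearMap.range B.mulVecLin
  · left
    rintro _ ⟨v, rfl⟩
    rw [mulVecLin_apply, hA]
    exact add_mem ⟨v, rfl⟩ (Submodule.smul_mem _ _ hx)
  · right
    obtain ⟨v, hBv, hxv⟩ : ∃ v, B *ᵥ v = 0 ∧ x ^ q ⬝ᵥ v ≠ 0 := by
      simpa [hB.mem_range_iff hG] using hx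
    by_cases hc : c = 0
    · simp [A, hc]
    have hxA : x ∈ LinearMap.range A.mulVecLin := by
      refine ⟨(c * (x ^ q ⬝ᵥ v))⁻¹ • v, ?_⟩
      rw [mulVecLin_apply, mulVec_smul, hA, hBv, zero_add, inv_smul_smul₀ (mul_ne_zero hc hxv)]
    rintro _ ⟨w, rfl⟩
    rw [mulVecLin_apply, show B *ᵥ w = A *ᵥ w - (c * (x ^ q ⬝ᵥ w)) • x by
      rw [hA, add_sub_cancel_right]]
    exact sub_mem ⟨w, rfl⟩ (Submodule.smul_mem _ _ hxA)

lemma exists_eq_smul_vecMulVec_of_rank_eq_one (hG : IsFrobInvolution q F)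
    (htr : ∃ t : F, t + t ^ q ≠ 0) (hM : IsHerm q M) (h1 : M.rank = 1) :
    ∃ (c : F) (x : n → F), M = c • vecMulVec x (x ^ q) := by
  have hM0 : M ≠ 0 := by
    rintro rfl
    simp at h1
  obtain ⟨w, hw⟩ := hM.exists_form_ne_zero hG htr hM0
  have h := rank_sub_smul_vecMulVec_add_one hw
  rw [h1, Nat.add_eq_right, ← hM.pow_mulVec hG] at h
  exact ⟨_, _, sub_eq_zero.1 (eq_zero_of_rank_eq_zero h)⟩

lemma range_eq_of_rank_sub_eq_one (hG : IsFrobInvolution q F) (htr : ∃ t : F, t + t ^ q ≠ 0)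
    (hA : IsHerm q A) (hB : IsHerm q B) (hrk : A.rank = B.rank) (h1 : (A - B).rank = 1) :
    LinearMap.range A.mulVecLin = LinearMap.range B.mulVecLin := by
  have hAB : IsHerm q (A - B) := by rw [IsHerm, hG.ctrans_sub, hA, hB]
  obtain ⟨c, x, hcx⟩ := hAB.exists_eq_smul_vecMulVec_of_rank_eq_one hG htr h1
  rw [sub_eq_iff_eq_add'] at hcx
  rcases hcx ▸ hB.range_add_smul_vecMulVec_le_or_ge hG c x with hle | hle
  · exact Submodule.eq_of_le_of_finrank_eq hle hrk
  · exact (Submodule.eq_of_le_of_finrank_eq hle hrk.symm).symm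

end IsHerm

lemma IsHerm.mul_mul_ctrans {q : ℕ} {F : Type*} [Field F] {ι κ : Type*} [Fintype κ]
    (hG : IsFrobInvolution q F) (C : Matrix ι κ F) {X : Matrix κ κ F} (hX : IsHerm q X) :
    IsHerm q (C * X * ctrans q C) := by
  rw [IsHerm, hG.ctrans_mul, hG.ctrans_mul, hG.ctrans_ctrans, hX, Matrix.mul_assoc]

section Congruence

variable {q : ℕ} {F : Type*} [Field F] {ι κ : Type*} [Fintype ι] [Fintype κ] [DecidableEq κ]
  {C : Matrix ι κ F} {L : Matrix κ ι F}

lemma Matrix.isUnit_of_rank_eq_card {X : Matrix κ κ F} (h : X.rank = Fintype.card κ) :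
    IsUnit X := by
  rw [← mulVec_surjective_iff_isUnit]
  refine LinearMap.range_eq_top.1
    (Submodule.eq_top_of_finrank_eq (S := LinearMap.range X.mulVecLin) ?_)
  rw [← Matrix.rank, h, Module.finrank_fintype_fun_eq_card]

lemma Matrix.rank_eq_card_of_mul_eq_one (hLC : L * C = 1) : C.rank = Fintype.card κ :=
  le_antisymm (rank_le_card_width C) (by simpa [hLC] using rank_mul_le_right L C)

lemma IsFrobInvolution.rank_mul_mul_ctrans (hG : IsFrobInvolution q F) (hLC : L * C = 1)
    (X : Matrix κ κ F) : (C * X * ctrans q C).rank = X.rank := by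
  have hX : L * (C * X * ctrans q C) * ctrans q L = X := calc
    _ = L * C * X * (ctrans q C * ctrans q L) := by simp only [Matrix.mul_assoc]
    _ = X := by rw [← hG.ctrans_mul, hLC, hG.ctrans_one, Matrix.one_mul, Matrix.mul_one]
  refine le_antisymm ((rank_mul_le_left _ _).trans (rank_mul_le_right _ _)) ?_
  conv_lhs => rw [← hX]
  exact (rank_mul_le_left _ _).trans (rank_mul_le_right _ _)

lemma IsFrobInvolution.range_mul_mul_ctrans (hG : IsFrobInvolution q F) (hLC : L * C = 1)
    {X : Matrix κ κ F} (hX : IsUnit X) :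
    LinearMap.range (C * X * ctrans q C).mulVecLin = LinearMap.range C.mulVecLin := by
  refine Submodule.eq_of_le_of_finrank_eq ?_ ?_
  · rw [Matrix.mul_assoc, mulVecLin_mul]
    exact LinearMap.range_comp_le_range _ _
  · change (C * X * ctrans q C).rank = C.rank
    rw [hG.rank_mul_mul_ctrans hLC, rank_of_isUnit X hX, rank_eq_card_of_mul_eq_one hLC]

lemma IsHerm.exists_eq_mul_mul_ctrans [DecidableEq ι] (hG : IsFrobInvolution q F)
    (hLC : L * C = 1) {A : Matrix ι ι F} (hA : IsHerm q A)
    (hr : LinearMap.range A.mulVecLin = LinearMap.range C.mulVecLin) :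
    ∃ X : Matrix κ κ F, IsHerm q X ∧ IsUnit X ∧ A = C * X * ctrans q C := by
  have hCLA : C * L * A = A := by
    refine ext_iff_mulVec.2 fun v => ?_
    obtain ⟨u, hu⟩ : A *ᵥ v ∈ LinearMap.range C.mulVecLin := hr ▸ ⟨v, rfl⟩
    rw [← mulVec_mulVec, ← hu, mulVecLin_apply, mulVec_mulVec, Matrix.mul_assoc, hLC,
      Matrix.mul_one]
  have hACL : A * (ctrans q L * ctrans q C) = A := by
    have h := congrArg (ctrans q) hCLA
    rwa [hG.ctrans_mul, hG.ctrans_mul, hA] at h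
  have hA' : A = C * (L * A * ctrans q L) * ctrans q C := calc
    A = C * L * A * (ctrans q L * ctrans q C) := by rw [hCLA, hACL]
    _ = C * (L * A * ctrans q L) * ctrans q C := by simp only [Matrix.mul_assoc]
  refine ⟨L * A * ctrans q L, ?_, ?_, hA'⟩
  · rw [IsHerm, hG.ctrans_mul, hG.ctrans_mul, hG.ctrans_ctrans, hA, Matrix.mul_assoc]
  · refine isUnit_of_rank_eq_card ?_
    rw [← hG.rank_mul_mul_ctrans hLC, ← hA', ← rank_eq_card_of_mul_eq_one hLC]
    exact congrArg (fun W : Submodule F (ι → F) => Module.finrank F W) hr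

end Congruence

lemma IsFrobInvolution.isHerm_smul_vecMulVec {q : ℕ} {F : Type*} [Field F] {n : Type*}
    (hG : IsFrobInvolution q F) {c : F} (hc : c ^ q = c)
    (x : n → F) : IsHerm q (c • vecMulVec x (x ^ q)) := by
  ext i j
  simp only [ctrans, of_apply, Matrix.smul_apply, vecMulVec_apply, Pi.pow_apply, smul_eq_mul,
    mul_pow, hG.pow_pow, hc]
  ring

section Steps

variable {q : ℕ} {F : Type*} [Field F] {n : Type*} [Fintype n] [DecidableEq n]

lemma Matrix.det_add_vecMulVec {X : Matrix n n F} (hX : IsUnit X) (u v : n → F) :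
    (X + vecMulVec u v).det = X.det * (1 + v ⬝ᵥ X⁻¹ *ᵥ u) := by
  rw [vecMulVec_eq Unit, det_add_replicateCol_mul_replicateRow ((isUnit_iff_isUnit_det X).1 hX),
    det_unique (n := Unit), dotProduct_mulVec]
  simp [Matrix.mul_apply, vecMul, dotProduct]

lemma Matrix.isUnit_sub_smul_vecMulVec {X : Matrix n n F} (hX : IsUnit X) {c : F} (hc : c ≠ 0)
    {u v : n → F} (h : v ⬝ᵥ X⁻¹ *ᵥ u ≠ c) : IsUnit (X - c⁻¹ • vecMulVec u v) := by
  rw [isUnit_iff_isUnit_det, sub_eq_add_neg, ← neg_smul, ← smul_vecMulVec, det_add_vecMulVec hX,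
    mulVec_smul, dotProduct_smul, smul_eq_mul, isUnit_iff_ne_zero]
  refine mul_ne_zero ((isUnit_iff_isUnit_det X).1 hX).ne_zero fun h0 => h ?_
  field_simp at h0
  linear_combination -h0

lemma Matrix.rank_vecMulVec_eq_one {u v : n → F} (hu : u ≠ 0) (hv : v ≠ 0) :
    (vecMulVec u v).rank = 1 := by
  refine le_antisymm (rank_vecMulVec_le u v) (Nat.one_le_iff_ne_zero.2 fun h => ?_)
  exact vecMulVec_ne_zero hu hv (eq_zero_of_rank_eq_zero h)

lemma IsHerm.exists_rank_sub_eq_one_of_ne [Fintype F] (hG : IsFrobInvolution q F) (hq : 3 ≤ q)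
    (hF : Fintype.card F = q ^ 2) {X Y : Matrix n n F} (hX : IsHerm q X) (hY : IsHerm q Y)
    (hXu : IsUnit X) (hYu : IsUnit Y) (hne : X ≠ Y) :
    ∃ Z, IsHerm q Z ∧ IsUnit Z ∧ (X - Z).rank = 1 ∧ (Z - Y).rank + 1 = (X - Y).rank := by
  set S := X - Y
  have hS : IsHerm q S := by rw [IsHerm, hG.ctrans_sub, hX, hY]
  -- `w* T w = w* S w - (S w)* X⁻¹ (S w)`, so `w* T w ≠ 0` keeps `Z` below invertible
  set T := S - S * X⁻¹ * S
  have hT : IsHerm q T := by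
    rw [IsHerm, hG.ctrans_sub, hG.ctrans_mul, hG.ctrans_mul, hS, hX.nonsing_inv hG hXu,
      ← Matrix.mul_assoc]
  have hT0 : T ≠ 0 := by
    have hTY : T = S * (X⁻¹ * Y) := by
      rw [show Y = X - S by simp [S], Matrix.mul_sub,
        nonsing_inv_mul _ ((isUnit_iff_isUnit_det X).1 hXu), Matrix.mul_sub, Matrix.mul_one,
        ← Matrix.mul_assoc]
    rw [hTY]
    exact fun h => sub_ne_zero.2 hne
      ((isUnit_nonsing_inv_iff.2 hXu |>.mul hYu).mul_left_eq_zero.1 h)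
  obtain ⟨w, hwS, hwT⟩ :=
    hS.exists_form_ne_zero_and_form_ne_zero hG hq hF hT (sub_ne_zero.2 hne) hT0
  set c := w ^ q ⬝ᵥ S *ᵥ w
  set x := S *ᵥ w
  have hx : x ≠ 0 := fun h => hwS (by
    show w ^ q ⬝ᵥ x = 0
    rw [h, dotProduct_zero])
  have hTw : w ^ q ⬝ᵥ T *ᵥ w = c - x ^ q ⬝ᵥ X⁻¹ *ᵥ x := by
    rw [sub_mulVec, dotProduct_sub, ← mulVec_mulVec, ← mulVec_mulVec,
      dotProduct_mulVec (w ^ q) S (X⁻¹ *ᵥ S *ᵥ w), ← hS.pow_mulVec hG]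
  refine ⟨X - c⁻¹ • vecMulVec x (x ^ q), ?_, ?_, ?_, ?_⟩
  · have hc : c⁻¹ ^ q = c⁻¹ := by rw [inv_pow, hS.pow_dotProduct_mulVec hG]
    rw [IsHerm, hG.ctrans_sub, hX, hG.isHerm_smul_vecMulVec hc x]
  · exact isUnit_sub_smul_vecMulVec hXu hwS fun h => hwT (by rw [hTw, h, sub_self])
  · rw [sub_sub_cancel, ← smul_vecMulVec]
    exact rank_vecMulVec_eq_one (smul_ne_zero (inv_ne_zero hwS) hx)
      (hG.pi_pow_eq_zero_iff.not.2 hx)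
  · rw [sub_right_comm, ← rank_sub_smul_vecMulVec_add_one hwS, ← hS.pow_mulVec hG]

end Steps

section Subspaces

variable {F : Type*} [Field F] {ι κ : Type*} [Fintype ι] [DecidableEq ι] [Fintype κ]
  [DecidableEq κ]

lemma Submodule.exists_matrix_range_eq {W : Submodule F (ι → F)}
    (hW : Module.finrank F W = Fintype.card κ) :
    ∃ (C : Matrix ι κ F) (L : Matrix κ ι F),
      L * C = 1 ∧ LinearMap.range C.mulVecLin = W := by
  let b := (Module.finBasisOfFinrankEq F W hW).reindex (Fintype.equivFin κ).symm
  let f : (κ → F) →ₗ[F] ι → F := W.subtype ∘ₗ b.equivFun.symm.toLinearMap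
  obtain ⟨g, hg⟩ := f.exists_leftInverse_of_injective
    (LinearMap.ker_eq_bot.2 (W.injective_subtype.comp b.equivFun.symm.injective))
  refine ⟨LinearMap.toMatrix' f, LinearMap.toMatrix' g, ?_, ?_⟩
  · rw [← LinearMap.toMatrix'_comp, hg, LinearMap.toMatrix'_id]
  · rw [← Matrix.toLin'_apply', Matrix.toLin'_toMatrix', LinearMap.range_comp,
      LinearEquiv.range, Submodule.map_top, Submodule.range_subtype]

end Subspaces

section Graph

variable {q : ℕ} {F : Type*} [Field F] {ι κ : Type*} [Fintype ι] [Fintype κ] {r : ℕ}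

lemma rkGraph_adj {A B : {A : Matrix ι ι F // IsHerm q A ∧ A.rank = r}} :
    (rkGraph q (F := F) ι r).Adj A B ↔ (A.1 - B.1).rank = 1 := by
  have hsymm : (B.1 - A.1).rank = (A.1 - B.1).rank := by
    rw [← neg_sub, ← neg_one_smul F, rank_smul_of_mem_nonZeroDivisors _
      (mem_nonZeroDivisors_of_ne_zero (neg_ne_zero.2 one_ne_zero))]
  rw [rkGraph, SimpleGraph.fromRel_adj, hsymm, or_self, and_iff_right_iff_imp]
  rintro h rfl
  simp at h

def rkGraphCongrHom [DecidableEq κ] (hG : IsFrobInvolution q F) {C : Matrix ι κ F}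
    {L : Matrix κ ι F} (hLC : L * C = 1) :
    rkGraph q (F := F) κ r →g rkGraph q (F := F) ι r where
  toFun X := ⟨C * X.1 * ctrans q C, X.2.1.mul_mul_ctrans hG C,
    (hG.rank_mul_mul_ctrans hLC _).trans X.2.2⟩
  map_rel' {X Y} h := by
    rw [rkGraph_adj] at h ⊢
    rw [← Matrix.sub_mul, ← Matrix.mul_sub, hG.rank_mul_mul_ctrans hLC, h]

theorem rkGraph_preconnected_of_card_eq [Fintype F] [DecidableEq κ] (hG : IsFrobInvolution q F)
    (hq : 3 ≤ q) (hF : Fintype.card F = q ^ 2) (hκ : Fintype.card κ = r) :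
    (rkGraph q (F := F) κ r).Preconnected := by
  subst hκ
  suffices ∀ d, ∀ X Y : {A : Matrix κ κ F // IsHerm q A ∧ A.rank = Fintype.card κ},
      (X.1 - Y.1).rank = d → (rkGraph q (F := F) κ _).Reachable X Y from
    fun X Y => this _ X Y rfl
  intro d
  induction d with
  | zero =>
    intro X Y h
    rw [Subtype.ext (sub_eq_zero.1 (eq_zero_of_rank_eq_zero h))]
  | succ d ih =>
    intro X Y h
    have hne : X.1 ≠ Y.1 := fun hXY => by simp [hXY] at h
    obtain ⟨Z, hZ, hZu, hXZ, hZY⟩ := X.2.1.exists_rank_sub_eq_one_of_ne hG hq hF Y.2.1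
      (isUnit_of_rank_eq_card X.2.2) (isUnit_of_rank_eq_card Y.2.2) hne
    let Z' : {A : Matrix κ κ F // IsHerm q A ∧ A.rank = Fintype.card κ} :=
      ⟨Z, hZ, rank_of_isUnit Z hZu⟩
    exact (rkGraph_adj.2 hXZ : (rkGraph q (F := F) κ _).Adj X Z').reachable.trans
      (ih Z' Y (Nat.succ_injective (hZY.trans h)))

theorem rkGraph_reachable_iff [Fintype F] [DecidableEq ι] (hG : IsFrobInvolution q F)
    (hq : 3 ≤ q) (hF : Fintype.card F = q ^ 2)
    {A B : {A : Matrix ι ι F // IsHerm q A ∧ A.rank = r}} :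
    (rkGraph q (F := F) ι r).Reachable A B ↔
      LinearMap.range A.1.mulVecLin = LinearMap.range B.1.mulVecLin := by
  constructor
  · intro h
    rw [SimpleGraph.reachable_iff_reflTransGen] at h
    induction h with
    | refl => rfl
    | @tail B C _ hadj ih =>
      exact ih.trans (B.2.1.range_eq_of_rank_sub_eq_one hG (exists_add_pow_ne_zero (by omega) hF)
        C.2.1 (B.2.2.trans C.2.2.symm) (rkGraph_adj.1 hadj))
  · intro hr
    obtain ⟨C, L, hLC, hC⟩ := Submodule.exists_matrix_range_eq (κ := Fin r)
      (A.2.2.trans (Fintype.card_fin r).symm)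
    obtain ⟨X, hX, hXu, hAX⟩ := A.2.1.exists_eq_mul_mul_ctrans hG hLC hC.symm
    obtain ⟨Y, hY, hYu, hBY⟩ := B.2.1.exists_eq_mul_mul_ctrans hG hLC (hr ▸ hC.symm)
    have := rkGraph_preconnected_of_card_eq hG hq hF (Fintype.card_fin r)
      ⟨X, hX, (rank_of_isUnit X hXu).trans (Fintype.card_fin r)⟩
      ⟨Y, hY, (rank_of_isUnit Y hYu).trans (Fintype.card_fin r)⟩
    convert this.map (rkGraphCongrHom hG hLC) <;> exact Subtype.ext ‹_›

end Graph

section Components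

variable {q : ℕ} {F : Type*} [Field F] {ι : Type*} [Fintype ι] [DecidableEq ι] {r : ℕ}

lemma rkGraph_mem_supp_iff [Fintype F] (hG : IsFrobInvolution q F) (hq : 3 ≤ q)
    (hF : Fintype.card F = q ^ 2) {A B : {A : Matrix ι ι F // IsHerm q A ∧ A.rank = r}} :
    B ∈ ((rkGraph q (F := F) ι r).connectedComponentMk A).supp ↔
      LinearMap.range B.1.mulVecLin = LinearMap.range A.1.mulVecLin := by
  rw [SimpleGraph.ConnectedComponent.mem_supp_iff, SimpleGraph.ConnectedComponent.eq,
    rkGraph_reachable_iff hG hq hF]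

lemma exists_rkGraph_range_eq (hG : IsFrobInvolution q F) {W : Submodule F (ι → F)}
    (hW : Module.finrank F W = r) :
    ∃ A : {A : Matrix ι ι F // IsHerm q A ∧ A.rank = r},
      LinearMap.range A.1.mulVecLin = W := by
  obtain ⟨C, L, hLC, hC⟩ :=
    Submodule.exists_matrix_range_eq (κ := Fin r) (hW.trans (Fintype.card_fin r).symm)
  refine ⟨rkGraphCongrHom hG hLC
    ⟨1, hG.ctrans_one, (rank_one (n := Fin r)).trans (Fintype.card_fin r)⟩,
    (hG.range_mul_mul_ctrans hLC isUnit_one).trans hC⟩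

theorem card_connectedComponent_rkGraph [Fintype F] (hG : IsFrobInvolution q F) (hq : 3 ≤ q)
    (hF : Fintype.card F = q ^ 2) :
    Nat.card (rkGraph q (F := F) ι r).ConnectedComponent =
      Nat.card {W : Submodule F (ι → F) // Module.finrank F W = r} := by
  refine Nat.card_congr (Equiv.ofBijective (SimpleGraph.ConnectedComponent.lift
    (fun A => ⟨LinearMap.range A.1.mulVecLin, A.2.2⟩)
    fun A B p _ => Subtype.ext ((rkGraph_reachable_iff hG hq hF).1 p.reachable)) ⟨?_, ?_⟩)
  · refine SimpleGraph.ConnectedComponent.ind₂ fun A B h => ?_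
    exact SimpleGraph.ConnectedComponent.eq.2
      ((rkGraph_reachable_iff hG hq hF).2 (congrArg Subtype.val h))
  · rintro ⟨W, hW⟩
    obtain ⟨A, hA⟩ := exists_rkGraph_range_eq hG hW
    exact ⟨(rkGraph q (F := F) ι r).connectedComponentMk A, Subtype.ext hA⟩

end Components

lemma mul_fromBlocks_mul_ctrans {q : ℕ} {F : Type*} [Field F] {α β : Type*} [Fintype α]
    [Fintype β] (P : Matrix (α ⊕ β) (α ⊕ β) F) (X : Matrix α α F) :
    P * fromBlocks X 0 0 0 * ctrans q P = P.toCols₁ * X * ctrans q P.toCols₁ := by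
  ext i j
  simp [Matrix.mul_apply, Fintype.sum_sum_type, ctrans, toCols₁]

section Blocks

variable {q : ℕ} {F : Type*} [Field F] {α β : Type*} [Fintype α] [Fintype β] [DecidableEq α]
  [DecidableEq β]

lemma toRows₁_nonsing_inv_mul_toCols₁ {P : Matrix (α ⊕ β) (α ⊕ β) F} (hP : IsUnit P) :
    (P⁻¹).toRows₁ * P.toCols₁ = 1 := by
  ext i j
  simpa [Matrix.mul_apply, Fintype.sum_sum_type, one_apply] using
    congrFun (congrFun (nonsing_inv_mul P ((isUnit_iff_isUnit_det P).1 hP)) (.inl i)) (.inl j)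

lemma exists_isUnit_range_toCols₁_eq {W : Submodule F (α ⊕ β → F)}
    (hW : Module.finrank F W = Fintype.card α) :
    ∃ P : Matrix (α ⊕ β) (α ⊕ β) F,
      IsUnit P ∧ LinearMap.range P.toCols₁.mulVecLin = W := by
  obtain ⟨W', hc⟩ := W.exists_isCompl
  have hW' : Module.finrank F W' = Fintype.card β := by
    have := Submodule.finrank_add_eq_of_isCompl hc
    rw [Module.finrank_fintype_fun_eq_card, Fintype.card_sum] at this
    omega
  obtain ⟨C, -, -, hC⟩ := W.exists_matrix_range_eq hW
  obtain ⟨C', -, -, hC'⟩ := W'.exists_matrix_range_eq hW'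
  refine ⟨fromCols C C', mulVec_surjective_iff_isUnit.1 fun y => ?_, hC⟩
  obtain ⟨w, hw, w', hw', rfl⟩ :=
    Submodule.mem_sup.1 (hc.sup_eq_top ▸ Submodule.mem_top (x := y))
  obtain ⟨a, rfl⟩ := hC ▸ hw
  obtain ⟨b, rfl⟩ := hC' ▸ hw'
  exact ⟨Sum.elim a b, fromCols_mulVec_sumElim C C' a b⟩

lemma IsHerm.exists_eq_mul_fromBlocks_iff (hG : IsFrobInvolution q F)
    {P : Matrix (α ⊕ β) (α ⊕ β) F} (hP : IsUnit P) {A : Matrix (α ⊕ β) (α ⊕ β) F}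
    (hA : IsHerm q A) :
    (∃ X : Matrix α α F,
        IsHerm q X ∧ IsUnit X ∧ A = P * fromBlocks X 0 0 0 * ctrans q P) ↔
      LinearMap.range A.mulVecLin = LinearMap.range P.toCols₁.mulVecLin := by
  simp_rw [mul_fromBlocks_mul_ctrans]
  constructor
  · rintro ⟨X, -, hXu, rfl⟩
    exact hG.range_mul_mul_ctrans (toRows₁_nonsing_inv_mul_toCols₁ hP) hXu
  · exact hA.exists_eq_mul_mul_ctrans hG (toRows₁_nonsing_inv_mul_toCols₁ hP)

end Blocks

theorem stmt14_general (q k m : ℕ) (hq3 : 3 ≤ q)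
    (F : Type*) [Field F] [Fintype F] (hF : Fintype.card F = q ^ 2) :
    (∀ S : Set {A : Matrix (Fin k ⊕ Fin m) (Fin k ⊕ Fin m) F // IsHerm q A ∧ A.rank = k},
      (∃ c : (rkGraph q (F := F) (Fin k ⊕ Fin m) k).ConnectedComponent, S = c.supp) ↔
      (∃ P : Matrix (Fin k ⊕ Fin m) (Fin k ⊕ Fin m) F, IsUnit P ∧
        S = {A | ∃ X : Matrix (Fin k) (Fin k) F, IsHerm q X ∧ IsUnit X ∧
          A.1 = P * Matrix.fromBlocks X 0 0 0 * ctrans q P})) ∧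
    Nat.card (rkGraph q (F := F) (Fin k ⊕ Fin m) k).ConnectedComponent =
      Nat.card {W : Submodule F ((Fin k ⊕ Fin m) → F) // Module.finrank F W = k} := by
  have hG := isFrobInvolution_of_card hF
  refine ⟨fun S => ⟨?_, ?_⟩, card_connectedComponent_rkGraph hG hq3 hF⟩
  · rintro ⟨c, rfl⟩
    induction c using SimpleGraph.ConnectedComponent.ind with | h A => ?_
    obtain ⟨P, hP, hPA⟩ := exists_isUnit_range_toCols₁_eq (W := LinearMap.range A.1.mulVecLin)
      (A.2.2.trans (Fintype.card_fin k).symm)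
    refine ⟨P, hP, Set.ext fun B => ?_⟩
    rw [Set.mem_ofPred_eq, B.2.1.exists_eq_mul_fromBlocks_iff hG hP, hPA,
      rkGraph_mem_supp_iff hG hq3 hF]
  · rintro ⟨P, hP, rfl⟩
    have hPk : P.toCols₁.rank = k := (rank_eq_card_of_mul_eq_one
      (toRows₁_nonsing_inv_mul_toCols₁ hP)).trans (Fintype.card_fin k)
    obtain ⟨A, hA⟩ := exists_rkGraph_range_eq hG hPk
    refine ⟨(rkGraph q (F := F) _ k).connectedComponentMk A, Set.ext fun B => ?_⟩
    rw [Set.mem_ofPred_eq, B.2.1.exists_eq_mul_fromBlocks_iff hG hP, ← hA,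
      rkGraph_mem_supp_iff hG hq3 hF]

/-- **Remark after Lemma 3.7.** Let `q ≥ 3`, `n ≥ 2`, `1 ≤ k ≤ n − 2` (here the index set
is `Fin k ⊕ Fin m` with `m = n − k ≥ 2`).  The connected components of the graph of
hermitian `n × n` matrices of rank `k` are precisely the sets
`{P (Ẋ ⊕ 0_{n−k}) P* : Ẋ ∈ HGL_k(F_{q²})}` for invertible `P`, and the number of
components equals the number of `k`-dimensional subspaces of `F_{q²}ⁿ` (the Gaussian
binomial coefficient `[n choose k]` with parameter `q²`). -/
theorem stmt14 (q k m : ℕ) (hq : IsPrimePow q) (hq3 : 3 ≤ q) (hk : 1 ≤ k) (hm : 2 ≤ m)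
    (F : Type*) [Field F] [Fintype F] (hF : Fintype.card F = q ^ 2) :
    (∀ S : Set {A : Matrix (Fin k ⊕ Fin m) (Fin k ⊕ Fin m) F // IsHerm q A ∧ A.rank = k},
      (∃ c : (rkGraph q (F := F) (Fin k ⊕ Fin m) k).ConnectedComponent, S = c.supp) ↔
      (∃ P : Matrix (Fin k ⊕ Fin m) (Fin k ⊕ Fin m) F, IsUnit P ∧
        S = {A | ∃ X : Matrix (Fin k) (Fin k) F, IsHerm q X ∧ IsUnit X ∧
          A.1 = P * Matrix.fromBlocks X 0 0 0 * ctrans q P})) ∧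
    Nat.card (rkGraph q (F := F) (Fin k ⊕ Fin m) k).ConnectedComponent =
      Nat.card {W : Submodule F ((Fin k ⊕ Fin m) → F) // Module.finrank F W = k} :=
  stmt14_general q k m hq3 F hF
end

section
/- Let q ≡ 3 (mod 4) be a prime power, let P be an invertible 2×2 matrix over F_{q²}, and define Ψ : H₂(F_{q²}) → H₂(F_{q²}) by Ψ(A) = P A P*. If (det P)·(conj of det P) is a nonzero square in F_q, then there exist a Lorentz matrix L and a nonzero α ∈ F_q such that Ψ(Ω(r)) = Ω(α L r) for all r ∈ F_q⁴. If (det P)·(conj of det P) is not a square in F_q, then there exist an anti-Lorentz matrix K and a nonzero α ∈ F_q such that Ψ(Ω(r)) = Ω(α K r) for all r ∈ F_q⁴. -/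
open Matrix

/-- The indefinite Minkowski inner product `(r, s) = −x₁x₂ − y₁y₂ − z₁z₂ + t₁t₂`
(the speed of light is normalized to `c = 1`). -/
def minkProd {K : Type*} [Field K] (r s : Fin 4 → K) : K :=
  -(r 0 * s 0) - r 1 * s 1 - r 2 * s 2 + r 3 * s 3

/-- `L` is a Lorentz matrix: `(L r, L s) = (r, s)` for all events `r, s`. -/
def IsLorentz {K : Type*} [Field K] (L : Matrix (Fin 4) (Fin 4) K) : Prop :=
  ∀ r s : Fin 4 → K, minkProd (L *ᵥ r) (L *ᵥ s) = minkProd r s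

/-- `L` is an anti-Lorentz matrix: `(L r, L s) = −(r, s)` for all events `r, s`. -/
def IsAntiLorentz {K : Type*} [Field K] (L : Matrix (Fin 4) (Fin 4) K) : Prop :=
  ∀ r s : Fin 4 → K, minkProd (L *ᵥ r) (L *ᵥ s) = -minkProd r s

/-- Hua's correspondence `Ω : F_q⁴ → H₂(F_{q²})`,
`Ω((x, y, z, t)ᵀ) = [[t + x, y + i z], [y − i z, t − x]]`, where `e : F_q →+* F_{q²}` is
the embedding of the fixed field and `i² = −1`. -/
def omegaMap {K F : Type*} [Field K] [Field F] (e : K →+* F) (im : F) (r : Fin 4 → K) :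
    Matrix (Fin 2) (Fin 2) F :=
  !![e (r 3) + e (r 0), e (r 1) + im * e (r 2);
     e (r 1) - im * e (r 2), e (r 3) - e (r 0)]

/-- **Lemma 4.7 (iv)–(v).** Let `Ψ(A) = P A P*` for an invertible `2 × 2` matrix `P` over
`F_{q²}`.  If `det P ⋅ conj(det P)` is a nonzero square in `F_q`, then
`Ψ(Ω(r)) = Ω(α L r)` for some Lorentz matrix `L` and `0 ≠ α ∈ F_q`; if it is not a square
in `F_q`, then `Ψ(Ω(r)) = Ω(α K r)` for some anti-Lorentz matrix `K` and `0 ≠ α ∈ F_q`. -/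
theorem stmt17 (q : ℕ) (hq : IsPrimePow q) (hq4 : q % 4 = 3)
    (K F : Type*) [Field K] [Fintype K] [Field F] [Fintype F]
    (hK : Fintype.card K = q) (hF : Fintype.card F = q ^ 2)
    (e : K →+* F) (hfix : ∀ x : F, x ^ q = x ↔ x ∈ Set.range e)
    (im : F) (him : im ^ 2 = -1)
    (P : Matrix (Fin 2) (Fin 2) F) (hP : IsUnit P) :
    ((∃ b : K, b ≠ 0 ∧ e (b ^ 2) = P.det * P.det ^ q) →
      ∃ (L : Matrix (Fin 4) (Fin 4) K) (α : K), IsLorentz L ∧ α ≠ 0 ∧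
        ∀ r : Fin 4 → K,
          P * omegaMap e im r * ctrans q P = omegaMap e im (α • (L *ᵥ r))) ∧
    ((¬ ∃ b : K, e (b ^ 2) = P.det * P.det ^ q) →
      ∃ (Km : Matrix (Fin 4) (Fin 4) K) (α : K), IsAntiLorentz Km ∧ α ≠ 0 ∧
        ∀ r : Fin 4 → K,
          P * omegaMap e im r * ctrans q P = omegaMap e im (α • (Km *ᵥ r))) := by
  classical
  obtain ⟨p, k, hpp, hk, hpk⟩ := hq
  have hpprime : p.Prime := Nat.prime_iff.mpr hpp
  haveI : Fact p.Prime := ⟨hpprime⟩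
  have hq3 : 3 ≤ q := by omega
  have hq0 : q ≠ 0 := by omega
  have hqodd : Odd q := by rw [Nat.odd_iff]; omega
  -- characteristic of F is p
  have hcharF : ringChar F = p := by
    have h1 : (ringChar F).Prime := CharP.char_is_prime F (ringChar F)
    obtain ⟨n, hn1, hn2⟩ := FiniteField.card F (ringChar F)
    have hdvd : ringChar F ∣ p ^ (k * 2) := by
      rw [pow_mul, hpk, ← hF, hn2]
      exact dvd_pow_self _ (by positivity)
    exact (Nat.prime_dvd_prime_iff_eq h1 hpprime).mp (h1.dvd_of_dvd_pow hdvd)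
  haveI hCF : CharP F p := hcharF ▸ ringChar.charP F
  have hfrob : ∀ x y : F, (x + y) ^ q = x ^ q + y ^ q := by
    intro x y; rw [← hpk]; exact add_pow_char_pow x y p k
  have hneg : ∀ x : F, (-x) ^ q = -x ^ q := fun x => Odd.neg_pow hqodd x
  have hsub : ∀ x y : F, (x - y) ^ q = x ^ q - y ^ q := by
    intro x y; rw [sub_eq_add_neg, hfrob, hneg, sub_eq_add_neg]
  have h2F : (2 : F) ≠ 0 := by
    intro h
    have hp2 : p ∣ 2 := (CharP.cast_eq_zero_iff F p 2).mp (by exact_mod_cast h)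
    have : p = 2 := (Nat.prime_dvd_prime_iff_eq hpprime Nat.prime_two).mp hp2
    have h2q : 2 ∣ q := by rw [← hpk, ← this]; exact dvd_pow_self p (by omega)
    omega
  have h2K : (2 : K) ≠ 0 := by
    intro h
    exact h2F (by rw [← map_ofNat e 2, h, map_zero])
  have him0 : im ≠ 0 := by
    intro h; rw [h] at him; norm_num at him
  have hefix : ∀ a : K, (e a) ^ q = e a := fun a => (hfix (e a)).mpr ⟨a, rfl⟩
  have heinj : Function.Injective e := e.injective
  have hqq : ∀ x : F, (x ^ q) ^ q = x := by
    intro x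
    rw [← pow_mul, ← sq, ← hF, FiniteField.pow_card]
  have himq : im ^ q = -im := by
    have h4 : im ^ 4 = 1 := by
      rw [show (4 : ℕ) = 2 * 2 from rfl, pow_mul, him]; norm_num
    have hqe : q = 4 * (q / 4) + 3 := by omega
    calc im ^ q = im ^ (4 * (q / 4) + 3) := by rw [← hqe]
      _ = (im ^ 4) ^ (q / 4) * im ^ 3 := by rw [pow_add, pow_mul]
      _ = -im := by
          rw [h4, one_pow, one_mul, show (3 : ℕ) = 2 + 1 from rfl, pow_add, him, pow_one]
          ring
  have h2fix : (2 : F) ^ q = 2 := by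
    have := hefix 2; rwa [map_ofNat] at this
  -- hermitian facts
  have hherm_omega : ∀ r, ctrans q (omegaMap e im r) = omegaMap e im r := by
    intro r
    ext i j
    fin_cases i <;> fin_cases j <;>
      simp [ctrans, omegaMap, hfrob, hsub, hefix, mul_pow, himq] <;> ring
  have hct_mul : ∀ A B : Matrix (Fin 2) (Fin 2) F, ctrans q (A * B) = ctrans q B * ctrans q A := by
    intro A B
    ext i j
    simp [ctrans, mul_apply, Fin.sum_univ_two, hfrob, mul_pow]
    ring
  have hct_ct : ∀ A : Matrix (Fin 2) (Fin 2) F, ctrans q (ctrans q A) = A := by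
    intro A; ext i j; simp [ctrans, hqq]
  have hBherm : ∀ r, ctrans q (P * omegaMap e im r * ctrans q P)
      = P * omegaMap e im r * ctrans q P := by
    intro r
    rw [hct_mul, hct_mul, hct_ct, hherm_omega, mul_assoc]
  -- decoding
  set ei : F → K := Function.invFun e with hei
  have hei_e : ∀ y : F, y ^ q = y → e (ei y) = y := fun y hy =>
    Function.invFun_eq ((hfix y).mp hy)
  set Φ : (Fin 4 → K) → (Fin 4 → K) := fun r =>
    let B := P * omegaMap e im r * ctrans q P
    ![ei ((B 0 0 - B 1 1) / 2), ei ((B 0 1 + B 1 0) / 2),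
      ei ((B 0 1 - B 1 0) / (2 * im)), ei ((B 0 0 + B 1 1) / 2)] with hΦdef
  have hΩΦ : ∀ r, omegaMap e im (Φ r) = P * omegaMap e im r * ctrans q P := by
    intro r
    set B := P * omegaMap e im r * ctrans q P with hB
    have hherm : ctrans q B = B := hBherm r
    have h00 : (B 0 0) ^ q = B 0 0 := congrFun (congrFun hherm 0) 0
    have h11 : (B 1 1) ^ q = B 1 1 := congrFun (congrFun hherm 1) 1
    have h01 : (B 0 1) ^ q = B 1 0 := congrFun (congrFun hherm 1) 0
    have h10 : (B 1 0) ^ q = B 0 1 := congrFun (congrFun hherm 0) 1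
    have h2im : (2 * im) ^ q = -(2 * im) := by rw [mul_pow, h2fix, himq]; ring
    have hvx : e (Φ r 0) = (B 0 0 - B 1 1) / 2 :=
      hei_e _ (by show ((B 0 0 - B 1 1) / 2) ^ q = _; rw [div_pow, hsub, h00, h11, h2fix])
    have hvy : e (Φ r 1) = (B 0 1 + B 1 0) / 2 :=
      hei_e _ (by show ((B 0 1 + B 1 0) / 2) ^ q = _; rw [div_pow, hfrob, h01, h10, h2fix, add_comm])
    have hvz : e (Φ r 2) = (B 0 1 - B 1 0) / (2 * im) :=
      hei_e _ (by show ((B 0 1 - B 1 0) / (2 * im)) ^ q = _; rw [div_pow, hsub, h01, h10, h2im, div_neg, ← neg_div, neg_sub])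
    have hvt : e (Φ r 3) = (B 0 0 + B 1 1) / 2 :=
      hei_e _ (by show ((B 0 0 + B 1 1) / 2) ^ q = _; rw [div_pow, hfrob, h00, h11, h2fix])
    have heta : B = !![B 0 0, B 0 1; B 1 0, B 1 1] := Matrix.eta_fin_two B
    rw [heta]
    show (!![e (Φ r 3) + e (Φ r 0), e (Φ r 1) + im * e (Φ r 2);
       e (Φ r 1) - im * e (Φ r 2), e (Φ r 3) - e (Φ r 0)] : Matrix (Fin 2) (Fin 2) F) = _
    rw [hvx, hvy, hvz, hvt]
    congr 1 <;> [skip] <;> skip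
    ext i j
    fin_cases i <;> fin_cases j <;> simp <;> field_simp <;> ring
  -- injectivity of omegaMap
  have hΩinj : Function.Injective (omegaMap e im) := by
    intro r s h
    have h00 := congrFun (congrFun h 0) 0
    have h01 := congrFun (congrFun h 0) 1
    have h10 := congrFun (congrFun h 1) 0
    have h11 := congrFun (congrFun h 1) 1
    simp [omegaMap] at h00 h01 h10 h11
    have e0 : e (r 0) = e (s 0) := by
      have h2 : (2:F) * e (r 0) = 2 * e (s 0) := by linear_combination h00 - h11
      exact mul_left_cancel₀ h2F h2
    have e3 : e (r 3) = e (s 3) := by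
      have h2 : (2:F) * e (r 3) = 2 * e (s 3) := by linear_combination h00 + h11
      exact mul_left_cancel₀ h2F h2
    have e1 : e (r 1) = e (s 1) := by
      have h2 : (2:F) * e (r 1) = 2 * e (s 1) := by linear_combination h01 + h10
      exact mul_left_cancel₀ h2F h2
    have e2 : e (r 2) = e (s 2) := by
      have h2 : (2 * im) * e (r 2) = (2 * im) * e (s 2) := by linear_combination h01 - h10
      exact mul_left_cancel₀ (mul_ne_zero h2F him0) h2
    funext i
    fin_cases i
    exacts [heinj e0, heinj e1, heinj e2, heinj e3]
  have hΩadd : ∀ r s, omegaMap e im (r + s) = omegaMap e im r + omegaMap e im s := by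
    intro r s
    ext i j
    fin_cases i <;> fin_cases j <;> simp [omegaMap, map_add] <;> ring
  have hΩsmul : ∀ (c : K) r, omegaMap e im (c • r) = e c • omegaMap e im r := by
    intro c r
    ext i j
    fin_cases i <;> fin_cases j <;>
      simp [omegaMap, Pi.smul_apply, smul_eq_mul, _root_.map_mul, Matrix.smul_apply] <;> ring
  have hΦadd : ∀ r s, Φ (r + s) = Φ r + Φ s := by
    intro r s
    apply hΩinj
    rw [hΩΦ, hΩadd, hΩadd, hΩΦ, hΩΦ, mul_add, add_mul]
  have hΦsmul : ∀ (c : K) r, Φ (c • r) = c • Φ r := by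
    intro c r
    apply hΩinj
    rw [hΩΦ, hΩsmul, hΩsmul, hΩΦ, Matrix.mul_smul, Matrix.smul_mul]
  -- matrix of Φ
  set M : Matrix (Fin 4) (Fin 4) K := Matrix.of fun i j => Φ (Pi.single j 1) i with hMdef
  have hM : ∀ r, M *ᵥ r = Φ r := by
    intro r
    have hr : r = r 0 • (Pi.single 0 1 : Fin 4 → K) + r 1 • (Pi.single 1 1 : Fin 4 → K)
        + r 2 • (Pi.single 2 1 : Fin 4 → K) + r 3 • (Pi.single 3 1 : Fin 4 → K) := by
      funext i
      fin_cases i <;> simp [Pi.single_apply]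
    have hΦr : Φ r = r 0 • Φ (Pi.single 0 1) + r 1 • Φ (Pi.single 1 1)
        + r 2 • Φ (Pi.single 2 1) + r 3 • Φ (Pi.single 3 1) := by
      conv_lhs => rw [hr]
      rw [hΦadd, hΦadd, hΦadd, hΦsmul, hΦsmul, hΦsmul, hΦsmul]
    funext i
    rw [hΦr]
    simp [mulVec, dotProduct, Fin.sum_univ_four, hMdef, Pi.add_apply, Pi.smul_apply,
      smul_eq_mul]
    ring
  -- determinant facts
  have hdetΩ : ∀ r, (omegaMap e im r).det = e (minkProd r r) := by
    intro r
    simp only [omegaMap, Matrix.det_fin_two_of, minkProd, map_add, map_sub, map_neg, _root_.map_mul]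
    linear_combination (e (r 2) * e (r 2)) * him
  have hdetct : (ctrans q P).det = P.det ^ q := by
    let σ : F →+* F :=
      { toFun := fun x => x ^ q
        map_one' := one_pow q
        map_mul' := fun x y => mul_pow x y q
        map_zero' := zero_pow hq0
        map_add' := hfrob }
    have h1 : ctrans q P = (P.map σ)ᵀ := rfl
    rw [h1, det_transpose]
    exact (RingHom.map_det σ P).symm
  set N : F := P.det * P.det ^ q with hN
  have hNfix : N ^ q = N := by
    rw [hN, mul_pow, hqq]
    ring
  obtain ⟨n, hn⟩ : N ∈ Set.range e := (hfix N).mp hNfix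
  have hdetP0 : P.det ≠ 0 := (Matrix.isUnit_iff_isUnit_det P).mp hP |>.ne_zero
  have hN0 : N ≠ 0 := mul_ne_zero hdetP0 (pow_ne_zero q hdetP0)
  have hn0 : n ≠ 0 := by
    intro h; apply hN0; rw [← hn, h, map_zero]
  have hquad : ∀ r, minkProd (Φ r) (Φ r) = n * minkProd r r := by
    intro r
    apply heinj
    rw [_root_.map_mul, hn, ← hdetΩ, hΩΦ r, det_mul, det_mul, hdetΩ, hdetct, hN]
    ring
  have hpol : ∀ u v : Fin 4 → K, minkProd (u + v) (u + v)
      = minkProd u u + minkProd v v + 2 * minkProd u v := by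
    intro u v; simp [minkProd, Pi.add_apply]; ring
  have hbil : ∀ r s, minkProd (Φ r) (Φ s) = n * minkProd r s := by
    intro r s
    have h1 := hquad (r + s)
    rw [hΦadd, hpol, hpol] at h1
    have h2 := hquad r
    have h3 := hquad s
    have h4 : 2 * minkProd (Φ r) (Φ s) = 2 * (n * minkProd r s) := by
      linear_combination h1 - h2 - h3
    exact mul_left_cancel₀ h2K h4
  have hmks : ∀ (c : K) (u v : Fin 4 → K),
      minkProd (c • u) (c • v) = c * c * minkProd u v := by
    intro c u v; simp [minkProd, Pi.smul_apply, smul_eq_mul]; ring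
  -- the common construction
  have hmain : ∀ b : K, b ≠ 0 →
      ∀ r, P * omegaMap e im r * ctrans q P = omegaMap e im (b • ((b⁻¹ • M) *ᵥ r)) := by
    intro b hb r
    rw [smul_mulVec, hM, smul_smul, mul_inv_cancel₀ hb, one_smul]
    exact (hΩΦ r).symm
  constructor
  · rintro ⟨b, hb0, hb⟩
    have hnb : n = b ^ 2 := heinj (by rw [hn, hb])
    refine ⟨b⁻¹ • M, b, ?_, hb0, hmain b hb0⟩
    intro r s
    rw [smul_mulVec, smul_mulVec, hmks, hM, hM, hbil, hnb]
    field_simp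
  · rintro hns
    have hnsq : ¬ IsSquare n := by
      rintro ⟨c, hc⟩
      exact hns ⟨c, by rw [← hn, hc, sq]⟩
    have hK4 : Fintype.card K % 4 = 3 := by rw [hK]; exact hq4
    have hm1 : ¬ IsSquare (-1 : K) := by
      rw [FiniteField.isSquare_neg_one_iff]; omega
    have hsqneg : IsSquare (-n) := by
      have hχn : quadraticChar K n = -1 := quadraticChar_neg_one_iff_not_isSquare.mpr hnsq
      have hχm : quadraticChar K (-1) = -1 := quadraticChar_neg_one_iff_not_isSquare.mpr hm1
      have : quadraticChar K (-n) = 1 := by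
        rw [show (-n : K) = -1 * n by ring, _root_.map_mul, hχn, hχm]; ring
      exact (quadraticChar_one_iff_isSquare (neg_ne_zero.mpr hn0)).mp this
    obtain ⟨b, hb⟩ := hsqneg
    have hb0 : b ≠ 0 := by
      rintro rfl
      exact hn0 (neg_eq_zero.mp (by simpa using hb))
    have hnb : n = -(b * b) := by rw [← hb]; ring
    refine ⟨b⁻¹ • M, b, ?_, hb0, hmain b hb0⟩
    intro r s
    rw [smul_mulVec, smul_mulVec, hmks, hM, hM, hbil, hnb]
    field_simp
end
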